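/- arXiv:math/0502563 — 8 statements merged into one kernel-verified Lean document; each statement's English description precedes it below -/
import Mathlib

section
/- Let (W,S) be a Coxeter system and T ⊆ S. Then R(W) ∩ W_T = R(W_T); that is, an element r of the standard parabolic subgroup W_T is conjugate in W to some generator s ∈ S if and only if r = w t w⁻¹ for some w ∈ W_T and t ∈ T. -/
/-!
Tits' signed action of `W` on `W × ZMod 2` shows that the parity of the number of occurrences of
`t` in the right inversion sequence of a word depends only on the product of the word. This gives
the strong exchange condition for arbitrary, not necessarily reduced, words: every right inversion
of `π ω` occurs in the right inversion sequence of `ω`. A reflection `r ∈ W_T` is a right inversion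
of itself, so writing `r` as a word in `T`, it occurs in the right inversion sequence of that word,
i.e. `r = (π v)⁻¹ * s i * π v` with `i ∈ T` and `v` a suffix of the word.
-/

theorem List.even_count_of_getElem_add_eq {α : Type*} [BEq α] (l : List α) (p : ℕ)
    (hl : l.length = 2 * p) (h : ∀ k (hk : k < p), l[k + p] = l[k]) (a : α) :
    Even (l.count a) := by
  have hhalf : l.drop p = l.take p :=
    List.ext_getElem (by simp only [List.length_drop, List.length_take]; omega) fun k hk _ => by
      rw [List.length_drop] at hk
      simp only [List.getElem_drop, List.getElem_take, add_comm p k]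
      exact h k (by omega)
  rw [← l.take_append_drop p, List.count_append, hhalf]
  exact ⟨_, rfl⟩

namespace CoxeterSystem

variable {B W : Type*} [Group W] {M : CoxeterMatrix B} (cs : CoxeterSystem M W)

local prefix:100 "s " => cs.simple
local prefix:100 "π " => cs.wordProd
local prefix:100 "ris " => cs.rightInvSeq

theorem alternatingWord_two_mul_succ (i j : B) (p : ℕ) :
    alternatingWord i j (2 * (p + 1)) = i :: j :: alternatingWord i j (2 * p) := by
  rw [mul_add_one, alternatingWord_succ', alternatingWord_succ']
  simp

theorem reverse_alternatingWord_two_mul (i j : B) (p : ℕ) :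
    (alternatingWord i j (2 * p)).reverse = alternatingWord j i (2 * p) := by
  induction p with
  | zero => rfl
  | succ p ih =>
    rw [alternatingWord_two_mul_succ, mul_add_one, alternatingWord_succ, alternatingWord_succ]
    simp [ih]

theorem wordProd_alternatingWord_add_two_mul (i j : B) (n : ℕ) :
    π (alternatingWord i j (n + 2 * M i j)) = π (alternatingWord i j n) := by
  have hdiv : (n + 2 * M i j) / 2 = n / 2 + M i j := by omega
  simp [prod_alternatingWord_eq_mul_pow, hdiv, pow_add, simple_mul_simple_pow, Nat.even_add]

theorem even_count_rightInvSeq_alternatingWord [DecidableEq W] (i j : B) (t : W) :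
    Even ((ris (alternatingWord i j (2 * M i j))).count t) := by
  rw [← reverse_alternatingWord_two_mul, rightInvSeq_reverse, List.count_reverse]
  refine List.even_count_of_getElem_add_eq _ (M i j) (by simp) (fun k hk => ?_) t
  rw [getElem_leftInvSeq_alternatingWord _ _ _ _ _ (by omega),
    getElem_leftInvSeq_alternatingWord _ _ _ _ _ (by omega),
    ← wordProd_alternatingWord_add_two_mul _ _ _ (2 * k + 1)]
  congr 2
  ring

section ReflectionRepresentation

variable [DecidableEq W]

/-- The action of `s i` in Tits' permutation representation on `T × {±1}`, with `{±1}` written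
additively as `ZMod 2` and the first factor enlarged from the reflections to all of `W`. -/
def reflectionEnd (i : B) : Function.End (W × ZMod 2) :=
  fun x => (s i * x.1 * s i, x.2 + if x.1 = s i then 1 else 0)

theorem prod_map_reflectionEnd (ω : List B) (x : W × ZMod 2) :
    (ω.map cs.reflectionEnd).prod x =
      (π ω * x.1 * (π ω)⁻¹, x.2 + ((ris ω).count x.1 : ZMod 2)) := by
  induction ω with
  | nil => simp [Function.End.one_def]
  | cons i ω ih =>
    have hconj : π ω * x.1 * (π ω)⁻¹ = s i ↔ (π ω)⁻¹ * s i * π ω = x.1 := by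
      constructor <;> rintro h <;> rw [← h] <;> group
    rw [List.map_cons, List.prod_cons, Function.End.mul_def]
    change cs.reflectionEnd i ((ω.map cs.reflectionEnd).prod x) = _
    simp only [ih, reflectionEnd, rightInvSeq, List.count_cons, beq_iff_eq, hconj, wordProd_cons,
      mul_inv_rev, inv_simple, Prod.mk.injEq]
    constructor
    · group
    · push_cast
      ring

theorem pow_reflectionEnd_mul (i j : B) (p : ℕ) :
    (cs.reflectionEnd i * cs.reflectionEnd j) ^ p =
      ((alternatingWord i j (2 * p)).map cs.reflectionEnd).prod := by
  induction p with
  | zero => rfl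
  | succ p ih => simp [pow_succ', ih, alternatingWord_two_mul_succ, mul_assoc]

theorem isLiftable_reflectionEnd : M.IsLiftable cs.reflectionEnd := by
  intro i j
  have hprod : π (alternatingWord i j (2 * M i j)) = 1 := by
    simpa [alternatingWord] using cs.wordProd_alternatingWord_add_two_mul i j 0
  funext x
  rw [pow_reflectionEnd_mul, prod_map_reflectionEnd, hprod,
    ZMod.natCast_eq_zero_iff_even.mpr (cs.even_count_rightInvSeq_alternatingWord i j x.1)]
  simp [Function.End.one_def]

def reflectionRep : W →* Function.End (W × ZMod 2) :=
  cs.lift ⟨cs.reflectionEnd, cs.isLiftable_reflectionEnd⟩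

theorem reflectionRep_wordProd (ω : List B) :
    cs.reflectionRep (π ω) = (ω.map cs.reflectionEnd).prod := by
  simp [reflectionRep, wordProd, map_list_prod, Function.comp_def,
    lift_apply_simple cs cs.isLiftable_reflectionEnd]

/-- Humphreys' `η(w, t)`: the parity of the number of occurrences of `t` in the right inversion
sequence of any word for `w`. -/
def inversionParity (w t : W) : ZMod 2 := (cs.reflectionRep w (t, 0)).2

theorem inversionParity_wordProd (ω : List B) (t : W) :
    cs.inversionParity (π ω) t = (ris ω).count t := by
  simp [inversionParity, reflectionRep_wordProd, prod_map_reflectionEnd]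

theorem reflectionRep_apply (w : W) (x : W × ZMod 2) :
    cs.reflectionRep w x = (w * x.1 * w⁻¹, x.2 + cs.inversionParity w x.1) := by
  obtain ⟨ω, rfl⟩ := cs.wordProd_surjective w
  rw [inversionParity_wordProd, reflectionRep_wordProd, prod_map_reflectionEnd]

theorem inversionParity_mul (u v t : W) :
    cs.inversionParity (u * v) t = cs.inversionParity v t + cs.inversionParity u (v * t * v⁻¹) := by
  rw [inversionParity, map_mul, Function.End.mul_def]
  change (cs.reflectionRep u (cs.reflectionRep v (t, 0))).2 = _
  simp only [reflectionRep_apply, zero_add]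

theorem inversionParity_one (t : W) : cs.inversionParity 1 t = 0 := by
  simpa using cs.inversionParity_wordProd [] t

theorem inversionParity_simple_self (i : B) : cs.inversionParity (s i) (s i) = 1 := by
  simpa using cs.inversionParity_wordProd [i] (s i)

theorem inversionParity_inv_conj (u t : W) :
    cs.inversionParity u⁻¹ (u * t * u⁻¹) = cs.inversionParity u t := by
  have h := cs.inversionParity_mul u⁻¹ u t
  rw [inv_mul_cancel, inversionParity_one] at h
  exact (CharTwo.add_eq_zero.mp h.symm).symm

theorem IsReflection.inversionParity_self {t : W} (ht : cs.IsReflection t) :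
    cs.inversionParity t t = 1 := by
  obtain ⟨u, i, rfl⟩ := ht
  have hconj : u⁻¹ * (u * s i * u⁻¹) * u⁻¹⁻¹ = s i := by group
  have hsss : s i * s i * (s i)⁻¹ = s i := by simp [inv_simple]
  rw [inversionParity_mul, hconj, inversionParity_mul, inversionParity_simple_self, hsss,
    inversionParity_inv_conj, add_left_comm, CharTwo.add_self_eq_zero, add_zero]

theorem IsReflection.inversionParity_mul_self {t : W} (ht : cs.IsReflection t) (w : W) :
    cs.inversionParity (w * t) t = cs.inversionParity w t + 1 := by
  rw [inversionParity_mul, ht.inversionParity_self, ht.mul_self, one_mul, ht.inv, add_comm]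

theorem mem_rightInvSeq_of_inversionParity_ne_zero {ω : List B} {t : W}
    (h : cs.inversionParity (π ω) t ≠ 0) : t ∈ ris ω := by
  rw [inversionParity_wordProd] at h
  exact List.count_pos_iff.mp (Nat.pos_of_ne_zero fun h0 => h (by simp [h0]))

end ReflectionRepresentation

theorem mem_rightInvSeq_of_isRightInversion {ω : List B} {t : W}
    (ht : cs.IsRightInversion (π ω) t) : t ∈ ris ω := by
  classical
  by_contra hnot
  obtain ⟨ω', hω', hω'eq⟩ := cs.exists_isReduced (π ω * t)
  have hparity : cs.inversionParity (π ω') t ≠ 0 := by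
    rw [← hω'eq, ht.1.inversionParity_mul_self, inversionParity_wordProd,
      List.count_eq_zero_of_not_mem hnot]
    decide
  have hlt := (cs.isRightInversion_of_mem_rightInvSeq hω'
    (cs.mem_rightInvSeq_of_inversionParity_ne_zero hparity)).2
  rw [← hω'eq, mul_assoc, ht.1.mul_self, mul_one] at hlt
  exact lt_asymm ht.2 hlt

theorem exists_suffix_of_mem_rightInvSeq {ω : List B} {t : W} (ht : t ∈ ris ω) :
    ∃ i ∈ ω, ∃ v, v <:+ ω ∧ t = (π v)⁻¹ * s i * π v := by
  induction ω with
  | nil => simp at ht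
  | cons i ω ih =>
    rcases List.mem_cons.mp ht with rfl | ht
    · exact ⟨i, List.mem_cons_self, ω, List.suffix_cons i ω, rfl⟩
    · obtain ⟨j, hj, v, hv, rfl⟩ := ih ht
      exact ⟨j, List.mem_cons_of_mem i hj, v, hv.trans (List.suffix_cons i ω), rfl⟩

theorem IsReflection.isRightInversion_self {t : W} (ht : cs.IsReflection t) :
    cs.IsRightInversion t t := by
  refine ⟨ht, ?_⟩
  rw [ht.mul_self, length_one]
  exact ht.odd_length.pos

theorem wordProd_mem_closure {T : Set B} {ω : List B} (hω : ∀ i ∈ ω, i ∈ T) :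
    π ω ∈ Subgroup.closure (cs.simple '' T) := by
  refine Subgroup.list_prod_mem _ fun x hx => ?_
  obtain ⟨i, hi, rfl⟩ := List.mem_map.mp hx
  exact Subgroup.subset_closure ⟨i, hω i hi, rfl⟩

theorem exists_wordProd_eq_of_mem_closure {T : Set B} {w : W}
    (hw : w ∈ Subgroup.closure (cs.simple '' T)) : ∃ ω : List B, (∀ i ∈ ω, i ∈ T) ∧ π ω = w := by
  induction hw using Subgroup.closure_induction_right with
  | one => exact ⟨[], by simp, wordProd_nil cs⟩
  | mul_right w _ x hx ih | mul_inv_cancel w _ x hx ih =>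
    obtain ⟨ω, hω, rfl⟩ := ih
    obtain ⟨i, hi, rfl⟩ := hx
    refine ⟨ω ++ [i], by simpa [or_imp, forall_and] using ⟨hω, hi⟩, ?_⟩
    simp [wordProd_append]

end CoxeterSystem

/-- Reflections are intrinsic to a Coxeter system: for `T ⊆ S`, an element of the standard
parabolic subgroup `W_T` is a reflection of `(W, S)` if and only if it is a reflection of the
Coxeter system `(W_T, T)`, i.e. has the form `w t w⁻¹` with `w ∈ W_T` and `t ∈ T`. -/
theorem reflections_of_parabolic {B W : Type*} [Group W] (M : CoxeterMatrix B)
    (cs : CoxeterSystem M W) (T : Set B) (r : W)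
    (hr : r ∈ Subgroup.closure (cs.simple '' T)) :
    cs.IsReflection r ↔
      ∃ w ∈ Subgroup.closure (cs.simple '' T), ∃ t ∈ T, r = w * cs.simple t * w⁻¹ := by
  refine ⟨fun hrefl => ?_, fun ⟨w, _, t, _, hw⟩ => ⟨w, t, hw⟩⟩
  obtain ⟨ω, hωT, rfl⟩ := cs.exists_wordProd_eq_of_mem_closure hr
  obtain ⟨i, hi, v, hv, hrv⟩ := cs.exists_suffix_of_mem_rightInvSeq
    (cs.mem_rightInvSeq_of_isRightInversion hrefl.isRightInversion_self)
  refine ⟨(cs.wordProd v)⁻¹, inv_mem (cs.wordProd_mem_closure fun j hj => hωT j (hv.subset hj)),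
    i, hωT i hi, by rw [hrv, inv_inv]⟩
end

section
/- Let (W,S) be a Coxeter system with Coxeter matrix m and let T ⊆ S be such that for every t ∈ T and s ∈ S∖T the exponent m_{st} is even or ∞. Then there exists a group homomorphism φ_T : W → W such that φ_T(s) = s for every s ∈ S∖T and φ_T(t) = 1 for every t ∈ T. Its image is the standard parabolic subgroup W_{S∖T}, and φ_T restricts to the identity on W_{S∖T}. -/
/-- Let `T ⊆ S` be such that for all `t ∈ T` and `s ∈ S \ T` the exponent `m s t` is even or `∞`
(in a `CoxeterMatrix`, the entry `0` encodes `∞`, and it is even). Then there is a homomorphism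
`φ_T : W → W` which is the identity on the simple generators outside `T` and kills those in `T`;
its image is the standard parabolic subgroup `W_{S∖T}`, and it restricts to the identity
on `W_{S∖T}`. -/
theorem exists_retraction_of_even {B W : Type*} [Group W] (M : CoxeterMatrix B)
    (cs : CoxeterSystem M W) (T : Set B)
    (heven : ∀ t ∈ T, ∀ s ∉ T, Even (M t s)) :
    ∃ φ : W →* W,
      (∀ s ∉ T, φ (cs.simple s) = cs.simple s) ∧
      (∀ t ∈ T, φ (cs.simple t) = 1) ∧
      φ.range = Subgroup.closure (cs.simple '' Tᶜ) ∧
      ∀ w ∈ Subgroup.closure (cs.simple '' Tᶜ), φ w = w := by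
  classical
  set f : B → W := fun i => if i ∈ T then 1 else cs.simple i with hf
  have hlift : M.IsLiftable f := by
    intro i j
    by_cases hi : i ∈ T <;> by_cases hj : j ∈ T
    · simp [hf, hi, hj]
    · obtain ⟨k, hk⟩ := heven i hi j hj
      simp only [hf, if_pos hi, if_neg hj, one_mul]
      rw [hk, ← two_mul, pow_mul, cs.simple_sq, one_pow]
    · obtain ⟨k, hk⟩ := heven j hj i hi
      simp only [hf, if_pos hj, if_neg hi, mul_one]
      rw [M.symmetric i j, hk, ← two_mul, pow_mul, cs.simple_sq, one_pow]
    · simp only [hf, if_neg hi, if_neg hj]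
      exact cs.simple_mul_simple_pow i j
  refine ⟨cs.lift ⟨f, hlift⟩, ?_, ?_, ?_, ?_⟩
  · intro s hs; rw [cs.lift_apply_simple]; simp [hf, hs]
  · intro t ht; rw [cs.lift_apply_simple]; simp [hf, ht]
  · apply le_antisymm
    · rintro w ⟨v, rfl⟩
      induction v using cs.simple_induction with
      | simple i =>
        rw [cs.lift_apply_simple]
        by_cases hi : i ∈ T
        · simp only [hf, if_pos hi]; exact Subgroup.one_mem _
        · simp only [hf, if_neg hi]
          exact Subgroup.subset_closure ⟨i, hi, rfl⟩
      | one => simpa using Subgroup.one_mem _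
      | mul a b ha hb => rw [map_mul]; exact Subgroup.mul_mem _ ha hb
    · rw [Subgroup.closure_le]
      rintro _ ⟨i, hi, rfl⟩
      exact ⟨cs.simple i, by rw [cs.lift_apply_simple]; simp [hf, Set.notMem_of_mem_compl hi]⟩
  · intro w hw
    induction hw using Subgroup.closure_induction with
    | mem x hx => obtain ⟨i, hi, rfl⟩ := hx; rw [cs.lift_apply_simple]; simp [hf, Set.notMem_of_mem_compl hi]
    | one => simp
    | mul a b _ _ ha hb => rw [map_mul, ha, hb]
    | inv a _ ha => rw [map_inv, ha]
end

section
/- Let (W,S) be a Coxeter system with Coxeter matrix m and let T ⊆ S be such that for every t ∈ T and s ∈ S∖T the exponent m_{st} is even or ∞. Then the kernel of φ_T is generated by the set S_T = {w t w⁻¹ : t ∈ T, w ∈ W_{S∖T}} of all conjugates of elements of T by elements of the standard parabolic subgroup W_{S∖T}. -/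
/-!
Let `K` be the subgroup generated by the conjugates `w t w⁻¹` (`t ∈ T`, `w ∈ W_{S∖T}`). It lies in
the kernel of `φ_T` and contains `T`, so together with `W_{S∖T}` it generates `W`. Conjugating by
a generator keeps `K` inside itself (generators in `T` lie in `K`, those outside `T` permute the
conjugates), so `K` is normal and every `w ∈ W` factors as `w = k u` with `k ∈ K`, `u ∈ W_{S∖T}`.
Since `φ_T` fixes `W_{S∖T}` pointwise, `φ_T w = u`, hence `w ∈ ker φ_T` forces `u = 1` and `w ∈ K`.
-/

open Subgroup

namespace Subgroup

variable {G H : Type*} [Group G] [Group H]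

theorem ker_eq_of_sup_eq_top {K P : Subgroup G} [K.Normal] (φ : G →* H) (hK : K ≤ φ.ker)
    (hKP : K ⊔ P = ⊤) (hP : Disjoint P φ.ker) : φ.ker = K := by
  refine le_antisymm (fun w hw => ?_) hK
  obtain ⟨k, hk, u, hu, rfl⟩ := mem_sup_of_normal_left.mp (hKP ▸ mem_top w : w ∈ K ⊔ P)
  have hu_ker : u ∈ φ.ker := by
    simpa [MonoidHom.mem_ker.mp (hK hk)] using hw
  rwa [disjoint_def.mp hP hu hu_ker, mul_one]

theorem conj_mem_closure_of_forall_conj_mem {X : Set G} {g : G}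
    (h : ∀ x ∈ X, g * x * g⁻¹ ∈ closure X) {n : G} (hn : n ∈ closure X) :
    g * n * g⁻¹ ∈ closure X := by
  induction hn using closure_induction with
  | mem x hx => exact h x hx
  | one => simp
  | mul x y _ _ hx hy => simpa [mul_assoc] using mul_mem hx hy
  | inv x _ hx => simpa [mul_assoc] using inv_mem hx

end Subgroup

section ParabolicConjugates

variable {G ι : Type*} [Group G] (f : ι → G) (T : Set ι)

/-- The set `S_T` of the paper, for a family `f` in place of the simple reflections. -/
def parabolicConjugates : Set G :=
  {x | ∃ t ∈ T, ∃ w ∈ closure (f '' Tᶜ), x = w * f t * w⁻¹}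

variable {f T}

theorem apply_mem_closure_parabolicConjugates {t : ι} (ht : t ∈ T) :
    f t ∈ closure (parabolicConjugates f T) :=
  subset_closure ⟨t, ht, 1, one_mem _, by simp⟩

theorem closure_parabolicConjugates_le_ker {H : Type*} [Group H] (φ : G →* H)
    (hφ : ∀ t ∈ T, φ (f t) = 1) : closure (parabolicConjugates f T) ≤ φ.ker := by
  rw [closure_le]
  rintro _ ⟨t, ht, w, -, rfl⟩
  simp [MonoidHom.mem_ker, hφ t ht]

theorem conj_mem_closure_parabolicConjugates {g : G} (hg : g ∈ closure (f '' Tᶜ)) {n : G}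
    (hn : n ∈ closure (parabolicConjugates f T)) :
    g * n * g⁻¹ ∈ closure (parabolicConjugates f T) := by
  refine conj_mem_closure_of_forall_conj_mem ?_ hn
  rintro _ ⟨t, ht, w, hw, rfl⟩
  exact subset_closure ⟨t, ht, g * w, mul_mem hg hw, by group⟩

theorem closure_parabolicConjugates_normal (hf : closure (Set.range f) = ⊤) :
    (closure (parabolicConjugates f T)).Normal := by
  set K := closure (parabolicConjugates f T)
  set P := closure (f '' Tᶜ)
  have hconj : ∀ g ∈ (K : Set G) ∪ P, ∀ n ∈ K, g * n * g⁻¹ ∈ K := by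
    rintro g (hg | hg) n hn
    · exact mul_mem (mul_mem hg hn) (inv_mem hg)
    · exact conj_mem_closure_parabolicConjugates hg hn
  have hgen : ∀ s, f s ∈ (K : Set G) ∪ P := by
    intro s
    by_cases hs : s ∈ T
    · exact Or.inl (apply_mem_closure_parabolicConjugates hs)
    · exact Or.inr (subset_closure ⟨s, hs, rfl⟩)
  refine ⟨fun n hn g => ?_⟩
  have hg : g ∈ closure (Set.range f) := hf ▸ mem_top g
  induction hg using closure_induction'' generalizing n with
  | mem _ hx =>
    obtain ⟨s, rfl⟩ := hx
    exact hconj _ (hgen s) n hn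
  | inv_mem _ hx =>
    obtain ⟨s, rfl⟩ := hx
    exact hconj _ ((hgen s).imp (K.inv_mem ·) (P.inv_mem ·)) n hn
  | one => simpa using hn
  | mul x y _ _ hx hy => simpa [mul_assoc] using hx _ (hy n hn)

theorem closure_parabolicConjugates_sup_eq_top (hf : closure (Set.range f) = ⊤) :
    closure (parabolicConjugates f T) ⊔ closure (f '' Tᶜ) = ⊤ := by
  rw [eq_top_iff, ← hf, closure_le]
  rintro _ ⟨s, rfl⟩
  by_cases hs : s ∈ T
  · exact mem_sup_left (apply_mem_closure_parabolicConjugates hs)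
  · exact mem_sup_right (subset_closure ⟨s, hs, rfl⟩)

end ParabolicConjugates

theorem ker_retraction_eq_closure_conjugates_general {B W : Type*} [Group W] (M : CoxeterMatrix B)
    (cs : CoxeterSystem M W) (T : Set B)
    (φ : W →* W)
    (hφ₁ : ∀ s ∉ T, φ (cs.simple s) = cs.simple s)
    (hφ₂ : ∀ t ∈ T, φ (cs.simple t) = 1) :
    φ.ker = Subgroup.closure
      {x : W | ∃ t ∈ T, ∃ w ∈ Subgroup.closure (cs.simple '' Tᶜ),
        x = w * cs.simple t * w⁻¹} := by
  have hgen := cs.subgroup_closure_range_simple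
  have hfix : Set.EqOn φ (MonoidHom.id W) (closure (cs.simple '' Tᶜ)) :=
    MonoidHom.eqOn_closure (by rintro _ ⟨s, hs, rfl⟩; exact hφ₁ s hs)
  have hdisj : Disjoint (closure (cs.simple '' Tᶜ)) φ.ker :=
    disjoint_def.mpr fun {u} hu hker => (hfix hu).symm.trans hker
  have := closure_parabolicConjugates_normal (T := T) hgen
  exact ker_eq_of_sup_eq_top (K := closure (parabolicConjugates cs.simple T)) φ
    (closure_parabolicConjugates_le_ker φ hφ₂) (closure_parabolicConjugates_sup_eq_top hgen) hdisj

/-- Under the evenness assumption on `T ⊆ S`, the kernel of the retraction `φ_T` is generated by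
the set `S_T` of all conjugates of simple generators from `T` by elements of the standard
parabolic subgroup `W_{S∖T}`. -/
theorem ker_retraction_eq_closure_conjugates {B W : Type*} [Group W] (M : CoxeterMatrix B)
    (cs : CoxeterSystem M W) (T : Set B)
    (heven : ∀ t ∈ T, ∀ s ∉ T, Even (M t s))
    (φ : W →* W)
    (hφ₁ : ∀ s ∉ T, φ (cs.simple s) = cs.simple s)
    (hφ₂ : ∀ t ∈ T, φ (cs.simple t) = 1) :
    φ.ker = Subgroup.closure
      {x : W | ∃ t ∈ T, ∃ w ∈ Subgroup.closure (cs.simple '' Tᶜ),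
        x = w * cs.simple t * w⁻¹} :=
  ker_retraction_eq_closure_conjugates_general M cs T φ hφ₁ hφ₂
end

section
/- Let (W,S) be a Coxeter system with Coxeter matrix m and let T ⊆ S be such that for every t ∈ T and s ∈ S∖T the exponent m_{st} is even or ∞. Let g_1, g_2 ∈ ker φ_T. Then g_1⁻¹g_2 ∈ S_T if and only if there exist u ∈ W_{S∖T} and t ∈ T with (g_1 u)⁻¹(g_2 u) = t. Moreover, if u_1, u_2 ∈ W_{S∖T} are such that (g_1 u_1)⁻¹(g_2 u_2) ∈ T, then u_1 = u_2. -/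
/-- Let `T ⊆ S` satisfy the evenness assumption and let `g₁, g₂ ∈ ker φ_T`. Then `g₁⁻¹g₂`
belongs to the set `S_T = {w t w⁻¹ : t ∈ T, w ∈ W_{S∖T}}` if and only if there are `u ∈ W_{S∖T}`
and `t ∈ T` with `(g₁u)⁻¹(g₂u) = t`. Moreover, if `u₁, u₂ ∈ W_{S∖T}` are such that
`(g₁u₁)⁻¹(g₂u₂) ∈ T`, then `u₁ = u₂`. -/
theorem edge_in_cayley_graph_of_kernel {B W : Type*} [Group W] (M : CoxeterMatrix B)
    (cs : CoxeterSystem M W) (T : Set B)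
    (heven : ∀ t ∈ T, ∀ s ∉ T, Even (M t s))
    (φ : W →* W)
    (hφ₁ : ∀ s ∉ T, φ (cs.simple s) = cs.simple s)
    (hφ₂ : ∀ t ∈ T, φ (cs.simple t) = 1)
    (g₁ g₂ : W) (hg₁ : g₁ ∈ φ.ker) (hg₂ : g₂ ∈ φ.ker) :
    ((g₁⁻¹ * g₂ ∈ {x : W | ∃ t ∈ T, ∃ w ∈ Subgroup.closure (cs.simple '' Tᶜ),
        x = w * cs.simple t * w⁻¹}) ↔
      (∃ u ∈ Subgroup.closure (cs.simple '' Tᶜ), ∃ t ∈ T,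
        (g₁ * u)⁻¹ * (g₂ * u) = cs.simple t)) ∧
    (∀ u₁ ∈ Subgroup.closure (cs.simple '' Tᶜ), ∀ u₂ ∈ Subgroup.closure (cs.simple '' Tᶜ),
      (∃ t ∈ T, (g₁ * u₁)⁻¹ * (g₂ * u₂) = cs.simple t) → u₁ = u₂) := by
  have hfix : ∀ u ∈ Subgroup.closure (cs.simple '' Tᶜ), φ u = u := by
    intro u hu
    induction hu using Subgroup.closure_induction with
    | mem x hx => obtain ⟨s, hs, rfl⟩ := hx; exact hφ₁ s hs
    | one => simp
    | mul a b _ _ ha hb => rw [map_mul, ha, hb]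
    | inv a _ ha => rw [map_inv, ha]
  constructor
  · constructor
    · rintro ⟨t, ht, w, hw, hx⟩
      refine ⟨w, hw, t, ht, ?_⟩
      have : (g₁ * w)⁻¹ * (g₂ * w) = w⁻¹ * (g₁⁻¹ * g₂) * w := by group
      rw [this, hx]; group
    · rintro ⟨u, hu, t, ht, hx⟩
      refine ⟨t, ht, u, hu, ?_⟩
      have : g₁⁻¹ * g₂ = u * ((g₁ * u)⁻¹ * (g₂ * u)) * u⁻¹ := by group
      rw [this, hx]
  · rintro u₁ hu₁ u₂ hu₂ ⟨t, ht, hx⟩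
    have h2 : u₁⁻¹ * u₂ = 1 := by
      have := congrArg φ hx
      simpa [map_mul, hfix u₁ hu₁, hfix u₂ hu₂, MonoidHom.mem_ker.mp hg₁,
        MonoidHom.mem_ker.mp hg₂, hφ₂ t ht] using this
    exact inv_mul_eq_one.mp h2
end

section
/- Let (W,S) be a Coxeter system with Coxeter matrix m and let T ⊆ S be such that for every t ∈ T and s ∈ S∖T the exponent m_{st} is even or ∞. Then the pair (ker φ_T, S_T) is a Coxeter system: there exist a Coxeter matrix m' indexed by the set S_T and a group isomorphism from the Coxeter group defined by m' onto ker φ_T which carries the simple generators bijectively onto the set S_T ⊆ ker φ_T. -/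
/-!
`W` splits as `N ⋊ W_{S∖T}`, where `N` is the Coxeter group on `S_T` whose matrix records the
orders in `W` of the products `τσ`, and `W_{S∖T}` acts on `N` by conjugating the generators.
The map `W → N ⋊ W_{S∖T}` sending each simple reflection to itself respects the Coxeter
relations: for `t ∈ T`, `s ∉ T` we have `(ts)² = t · sts` with `sts ∈ S_T`, so the even exponent
`m_{ts} = 2q` turns `(ts)^{m_{ts}}` into `(t · sts)^q`, a relation of `N`. The evident map back
to `W` is its inverse, and under this isomorphism `φ_T` becomes the projection onto `W_{S∖T}`,
whose kernel is `N`.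
-/

open SemidirectProduct

section

variable {G : Type*} [Group G]

lemma orderOf_conj (g x : G) : orderOf (g * x * g⁻¹) = orderOf x := by
  simpa using orderOf_injective (MulAut.conj g).toMonoidHom (MulAut.conj g).injective x

lemma mul_pow_eq_one_comm {a b : G} {n : ℕ} : (a * b) ^ n = 1 ↔ (b * a) ^ n = 1 := by
  rw [show b * a = a⁻¹ * (a * b) * a⁻¹⁻¹ by group, conj_pow, conj_eq_one_iff]

lemma SemidirectProduct.inl_mul_inr_sq {N H : Type*} [Group N] [Group H] {φ : H →* MulAut N}
    {h : H} (hh : h * h = 1) (n : N) : (inl n * inr h : N ⋊[φ] H) ^ 2 = inl (n * φ h n) := by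
  ext <;> simp [sq, hh]

def Subgroup.conjPerm (H : Subgroup G) (X : Set G)
    (hX : ∀ h ∈ H, ∀ x ∈ X, h * x * h⁻¹ ∈ X) : H →* Equiv.Perm X where
  toFun h :=
    { toFun x := ⟨h * x * (h : G)⁻¹, hX h h.2 x x.2⟩
      invFun x := ⟨(h : G)⁻¹ * x * (h : G)⁻¹⁻¹, hX _ (inv_mem h.2) x x.2⟩
      left_inv x := by ext; simp [mul_assoc]
      right_inv x := by ext; simp [mul_assoc] }
  map_one' := by ext; simp
  map_mul' h h' := by ext; simp [mul_assoc]

@[simp]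
lemma Subgroup.coe_conjPerm_apply (H : Subgroup G) (X : Set G)
    (hX : ∀ h ∈ H, ∀ x ∈ X, h * x * h⁻¹ ∈ X) (h : H) (x : X) :
    (H.conjPerm X hX h x : G) = h * x * (h : G)⁻¹ := rfl

end

namespace CoxeterMatrix

section PermAut

variable {B H : Type*} [Group H] (M : CoxeterMatrix B) (c : H →* Equiv.Perm B)
  (hc : ∀ h i j, M (c h i) (c h j) = M i j)

noncomputable def permEnd (h : H) : M.Group →* M.Group :=
  M.toCoxeterSystem.lift ⟨fun i => M.simple (c h i), fun i j => by
    simpa [hc] using M.toCoxeterSystem.simple_mul_simple_pow (c h i) (c h j)⟩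

lemma permEnd_simple (h : H) (i : B) : M.permEnd c hc h (M.simple i) = M.simple (c h i) :=
  M.toCoxeterSystem.lift_apply_simple _ i

lemma permEnd_mul (h h' : H) :
    M.permEnd c hc (h * h') = (M.permEnd c hc h).comp (M.permEnd c hc h') :=
  M.toCoxeterSystem.ext_simple fun i => by simp [permEnd_simple]

lemma permEnd_one : M.permEnd c hc 1 = MonoidHom.id _ :=
  M.toCoxeterSystem.ext_simple fun i => by simp [permEnd_simple]

noncomputable def permAut : H →* MulAut M.Group where
  toFun h := (M.permEnd c hc h).toMulEquiv (M.permEnd c hc h⁻¹)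
    (by rw [← permEnd_mul, inv_mul_cancel, permEnd_one])
    (by rw [← permEnd_mul, mul_inv_cancel, permEnd_one])
  map_one' := MulEquiv.ext fun x => by simp [permEnd_one]
  map_mul' h h' := MulEquiv.ext fun x => by simp [permEnd_mul]

lemma permAut_simple (h : H) (i : B) : M.permAut c hc h (M.simple i) = M.simple (c h i) :=
  M.permEnd_simple c hc h i

end PermAut

section OfInvolutions

variable {G : Type*} [Group G] (X : Set G) (hX : ∀ x ∈ X, x * x = 1)

/-- Infinite order is recorded as `0`, which is the `CoxeterMatrix` encoding of `∞`. -/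
noncomputable def ofInvolutions : CoxeterMatrix X where
  M := Matrix.of fun x y => orderOf ((x : G) * y)
  isSymm := Matrix.ext fun x y => by
    simp only [Matrix.transpose_apply, Matrix.of_apply]
    rw [← orderOf_inv, mul_inv_rev, inv_eq_of_mul_eq_one_right (hX x x.2),
      inv_eq_of_mul_eq_one_right (hX y y.2)]
  diagonal x := by simp [hX x x.2]
  off_diagonal x y hxy := by
    simp only [Matrix.of_apply, ne_eq, orderOf_eq_one_iff]
    intro h
    exact hxy (Subtype.ext (by
      rw [eq_inv_of_mul_eq_one_left h, inv_eq_of_mul_eq_one_right (hX y y.2)]))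

lemma ofInvolutions_apply (x y : X) : ofInvolutions X hX x y = orderOf ((x : G) * y) := rfl

lemma ofInvolutions_simple_mul_simple_pow_eq_one {x y : X} {n : ℕ} (h : ((x : G) * y) ^ n = 1) :
    ((ofInvolutions X hX).simple x * (ofInvolutions X hX).simple y) ^ n = 1 := by
  obtain ⟨k, rfl⟩ := orderOf_dvd_of_pow_eq_one h
  have hrel := (ofInvolutions X hX).toCoxeterSystem.simple_mul_simple_pow x y
  rw [CoxeterMatrix.toCoxeterSystem_simple, ofInvolutions_apply] at hrel
  rw [pow_mul, hrel, one_pow]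

noncomputable def ofInvolutionsHom : (ofInvolutions X hX).Group →* G :=
  (ofInvolutions X hX).toCoxeterSystem.lift ⟨fun x => x, fun _ _ => pow_orderOf_eq_one _⟩

lemma ofInvolutionsHom_simple (x : X) : ofInvolutionsHom X hX ((ofInvolutions X hX).simple x) = x :=
  (ofInvolutions X hX).toCoxeterSystem.lift_apply_simple _ x

variable (H : Subgroup G) (hXH : ∀ h ∈ H, ∀ x ∈ X, h * x * h⁻¹ ∈ X)

lemma ofInvolutions_conjPerm (h : H) (x y : X) :
    ofInvolutions X hX (H.conjPerm X hXH h x) (H.conjPerm X hXH h y) = ofInvolutions X hX x y := by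
  simp only [ofInvolutions_apply, Subgroup.coe_conjPerm_apply]
  rw [← orderOf_conj (h : G) ((x : G) * y)]
  group

noncomputable def conjAut : H →* MulAut (ofInvolutions X hX).Group :=
  (ofInvolutions X hX).permAut (H.conjPerm X hXH) (ofInvolutions_conjPerm X hX H hXH)

lemma conjAut_simple (h : H) (x : X) :
    conjAut X hX H hXH h ((ofInvolutions X hX).simple x) =
      (ofInvolutions X hX).simple (H.conjPerm X hXH h x) :=
  permAut_simple _ _ _ h x

noncomputable def semidirectHom : (ofInvolutions X hX).Group ⋊[conjAut X hX H hXH] H →* G :=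
  lift (ofInvolutionsHom X hX) H.subtype fun h => (ofInvolutions X hX).toCoxeterSystem.ext_simple
    fun x => by simp [conjAut_simple, ofInvolutionsHom_simple]

end OfInvolutions

end CoxeterMatrix

namespace CoxeterSystem

open CoxeterMatrix

variable {B W : Type*} [Group W] {M : CoxeterMatrix B} (cs : CoxeterSystem M W) (T : Set B)

/-- `W_{S∖T}` -/
abbrev complParabolic : Subgroup W := Subgroup.closure (cs.simple '' Tᶜ)

lemma simple_mem_complParabolic {s : B} (hs : s ∉ T) : cs.simple s ∈ cs.complParabolic T :=
  Subgroup.subset_closure ⟨s, hs, rfl⟩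

/-- `S_T` -/
def conjugatesByCompl : Set W :=
  {x | ∃ t ∈ T, ∃ w ∈ cs.complParabolic T, x = w * cs.simple t * w⁻¹}

lemma simple_mem_conjugatesByCompl {t : B} (ht : t ∈ T) :
    cs.simple t ∈ cs.conjugatesByCompl T :=
  ⟨t, ht, 1, one_mem _, by group⟩

lemma conj_mem_conjugatesByCompl : ∀ g ∈ cs.complParabolic T, ∀ x ∈ cs.conjugatesByCompl T,
    g * x * g⁻¹ ∈ cs.conjugatesByCompl T := by
  rintro g hg _ ⟨t, ht, w, hw, rfl⟩
  exact ⟨t, ht, g * w, mul_mem hg hw, by group⟩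

lemma mul_self_of_mem_conjugatesByCompl :
    ∀ x ∈ cs.conjugatesByCompl T, x * x = 1 := by
  rintro _ ⟨t, ht, w, hw, rfl⟩
  simp [mul_assoc]

noncomputable abbrev kernelMatrix : CoxeterMatrix (cs.conjugatesByCompl T) :=
  ofInvolutions _ (cs.mul_self_of_mem_conjugatesByCompl T)

noncomputable abbrev complAction : cs.complParabolic T →* MulAut (cs.kernelMatrix T).Group :=
  conjAut _ _ _ (cs.conj_mem_conjugatesByCompl T)

abbrev kernelSemidirect : Type _ :=
  (cs.kernelMatrix T).Group ⋊[cs.complAction T] cs.complParabolic T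

open Classical in
noncomputable def semidirectGenerator (i : B) : cs.kernelSemidirect T :=
  if h : i ∈ T then
    inl ((cs.kernelMatrix T).simple ⟨cs.simple i, cs.simple_mem_conjugatesByCompl T h⟩)
  else inr ⟨cs.simple i, cs.simple_mem_complParabolic T h⟩

lemma semidirectGenerator_mul_pow_of_mem_of_not_mem (heven : ∀ t ∈ T, ∀ s ∉ T, Even (M t s))
    {t s : B} (ht : t ∈ T) (hs : s ∉ T) :
    (cs.semidirectGenerator T t * cs.semidirectGenerator T s) ^ M t s = 1 := by
  obtain ⟨q, hq⟩ := heven t ht s hs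
  have hs_sq : (⟨cs.simple s, cs.simple_mem_complParabolic T hs⟩ *
      ⟨cs.simple s, cs.simple_mem_complParabolic T hs⟩ : cs.complParabolic T) = 1 :=
    Subtype.ext (cs.simple_mul_simple_self s)
  simp only [semidirectGenerator, dif_pos ht, dif_neg hs]
  rw [hq, ← two_mul, pow_mul, inl_mul_inr_sq hs_sq, ← map_pow, conjAut_simple,
    ofInvolutions_simple_mul_simple_pow_eq_one, map_one]
  simp only [Subgroup.coe_conjPerm_apply, inv_simple]
  rw [← cs.simple_mul_simple_pow t s, hq, ← two_mul, pow_mul, sq]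
  simp only [mul_assoc]

lemma isLiftable_semidirectGenerator (heven : ∀ t ∈ T, ∀ s ∉ T, Even (M t s)) :
    M.IsLiftable (cs.semidirectGenerator T) := by
  intro i j
  by_cases hi : i ∈ T <;> by_cases hj : j ∈ T
  · simp only [semidirectGenerator, dif_pos hi, dif_pos hj]
    rw [← map_mul, ← map_pow, ofInvolutions_simple_mul_simple_pow_eq_one _ _
      (cs.simple_mul_simple_pow i j), map_one]
  · exact cs.semidirectGenerator_mul_pow_of_mem_of_not_mem T heven hi hj
  · rw [mul_pow_eq_one_comm, M.symmetric]
    exact cs.semidirectGenerator_mul_pow_of_mem_of_not_mem T heven hj hi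
  · simp only [semidirectGenerator, dif_neg hi, dif_neg hj]
    rw [← map_mul, ← map_pow]
    convert map_one inr
    exact Subtype.ext (cs.simple_mul_simple_pow i j)

noncomputable def toSemidirect (heven : ∀ t ∈ T, ∀ s ∉ T, Even (M t s)) :
    W →* cs.kernelSemidirect T :=
  cs.lift ⟨_, cs.isLiftable_semidirectGenerator T heven⟩

lemma toSemidirect_simple (heven : ∀ t ∈ T, ∀ s ∉ T, Even (M t s)) (i : B) :
    cs.toSemidirect T heven (cs.simple i) = cs.semidirectGenerator T i :=
  cs.lift_apply_simple _ i

lemma toSemidirect_coe_complParabolic (heven : ∀ t ∈ T, ∀ s ∉ T, Even (M t s))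
    (g : cs.complParabolic T) :
    cs.toSemidirect T heven g = inr g := by
  obtain ⟨g, hg⟩ := g
  induction hg using Subgroup.closure_induction with
  | mem _ hx =>
    obtain ⟨s, hs, rfl⟩ := hx
    rw [toSemidirect_simple, semidirectGenerator, dif_neg hs]
  | one => exact (map_one _).trans (map_one inr).symm
  | mul x y _ _ hx hy => simp only [map_mul, hx, hy]; rfl
  | inv x _ hx => simp only [map_inv, hx]; rfl

lemma toSemidirect_comp_ofInvolutionsHom (heven : ∀ t ∈ T, ∀ s ∉ T, Even (M t s)) :
    (cs.toSemidirect T heven).comp (ofInvolutionsHom _ _) = inl := by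
  refine (cs.kernelMatrix T).toCoxeterSystem.ext_simple fun ⟨_, t, ht, w, hw, rfl⟩ => ?_
  have hw' : cs.toSemidirect T heven w = inr ⟨w, hw⟩ :=
    cs.toSemidirect_coe_complParabolic T heven ⟨w, hw⟩
  simp only [toCoxeterSystem_simple, MonoidHom.comp_apply, ofInvolutionsHom_simple, map_mul,
    map_inv, hw', toSemidirect_simple, semidirectGenerator, dif_pos ht]
  rw [← map_inv, ← inl_aut, conjAut_simple]
  rfl

lemma semidirectHom_comp_toSemidirect (heven : ∀ t ∈ T, ∀ s ∉ T, Even (M t s)) :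
    (semidirectHom _ _ _ _).comp (cs.toSemidirect T heven) = MonoidHom.id W := by
  refine cs.ext_simple fun i => ?_
  by_cases hi : i ∈ T
  · simp [toSemidirect_simple, semidirectGenerator, dif_pos hi, semidirectHom, ofInvolutionsHom_simple]
  · simp [toSemidirect_simple, semidirectGenerator, dif_neg hi, semidirectHom]

lemma ofInvolutionsHom_injective (heven : ∀ t ∈ T, ∀ s ∉ T, Even (M t s)) :
    Function.Injective (ofInvolutionsHom _ (cs.mul_self_of_mem_conjugatesByCompl T)) := by
  intro x y hxy
  simpa [← MonoidHom.comp_apply, toSemidirect_comp_ofInvolutionsHom] using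
    congrArg (cs.toSemidirect T heven) hxy

lemma eq_subtype_comp_rightHom_comp_toSemidirect (heven : ∀ t ∈ T, ∀ s ∉ T, Even (M t s))
    (φ : W →* W)
    (hφ₁ : ∀ s ∉ T, φ (cs.simple s) = cs.simple s) (hφ₂ : ∀ t ∈ T, φ (cs.simple t) = 1) :
    φ = (cs.complParabolic T).subtype.comp (rightHom.comp (cs.toSemidirect T heven)) := by
  refine cs.ext_simple fun i => ?_
  by_cases hi : i ∈ T
  · simp [hφ₂ i hi, toSemidirect_simple, semidirectGenerator, dif_pos hi]
  · simp [hφ₁ i hi, toSemidirect_simple, semidirectGenerator, dif_neg hi]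

lemma ker_eq_range_ofInvolutionsHom (heven : ∀ t ∈ T, ∀ s ∉ T, Even (M t s)) (φ : W →* W)
    (hφ₁ : ∀ s ∉ T, φ (cs.simple s) = cs.simple s) (hφ₂ : ∀ t ∈ T, φ (cs.simple t) = 1) :
    φ.ker = (ofInvolutionsHom _ (cs.mul_self_of_mem_conjugatesByCompl T)).range := by
  ext x
  rw [cs.eq_subtype_comp_rightHom_comp_toSemidirect T heven φ hφ₁ hφ₂, MonoidHom.mem_ker,
    MonoidHom.comp_apply, (Subgroup.subtype_injective _).eq_iff' (map_one _), MonoidHom.comp_apply]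
  constructor
  · intro hx
    obtain ⟨n, hn⟩ : cs.toSemidirect T heven x ∈ inl.range := by
      rwa [range_inl_eq_ker_rightHom]
    refine ⟨n, ?_⟩
    have hx := DFunLike.congr_fun (cs.semidirectHom_comp_toSemidirect T heven) x
    rwa [MonoidHom.comp_apply, ← hn, semidirectHom, lift_inl] at hx
  · rintro ⟨n, rfl⟩
    rw [← MonoidHom.comp_apply (cs.toSemidirect T heven), toSemidirect_comp_ofInvolutionsHom,
      rightHom_inl]

end CoxeterSystem

/-- Under the evenness assumption on `T ⊆ S`, the pair `(ker φ_T, S_T)` is a Coxeter system: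
there is a Coxeter matrix `M'` indexed by the set `S_T = {w t w⁻¹ : t ∈ T, w ∈ W_{S∖T}}` and a
Coxeter system structure on `ker φ_T` whose simple generator at index `τ ∈ S_T` is `τ` itself. -/
theorem kernel_is_coxeter_system {B W : Type*} [Group W] (M : CoxeterMatrix B)
    (cs : CoxeterSystem M W) (T : Set B)
    (heven : ∀ t ∈ T, ∀ s ∉ T, Even (M t s))
    (φ : W →* W)
    (hφ₁ : ∀ s ∉ T, φ (cs.simple s) = cs.simple s)
    (hφ₂ : ∀ t ∈ T, φ (cs.simple t) = 1) :
    ∃ (M' : CoxeterMatrix ({x : W | ∃ t ∈ T, ∃ w ∈ Subgroup.closure (cs.simple '' Tᶜ),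
          x = w * cs.simple t * w⁻¹} : Set W))
      (cs' : CoxeterSystem M' φ.ker),
      ∀ τ, ((cs'.simple τ : φ.ker) : W) = (τ : W) := by
  let e : (cs.kernelMatrix T).Group ≃* φ.ker :=
    (MonoidHom.ofInjective (cs.ofInvolutionsHom_injective T heven)).trans
      (MulEquiv.subgroupCongr (cs.ker_eq_range_ofInvolutionsHom T heven φ hφ₁ hφ₂).symm)
  exact ⟨cs.kernelMatrix T, (cs.kernelMatrix T).toCoxeterSystem.map e,
    CoxeterMatrix.ofInvolutionsHom_simple _ _⟩
end

section
/- Let (W,S) be a Coxeter system with Coxeter matrix m and let T ⊆ S be such that for every t ∈ T and s ∈ S∖T the exponent m_{st} is even or ∞. For t ∈ T set A_t = {s ∈ S∖T : m_{st} = 2}. Let t_1, t_2 ∈ T and w_1, w_2 ∈ W_{S∖T}. Then w_1 t_1 w_1⁻¹ = w_2 t_2 w_2⁻¹ if and only if t_1 = t_2 and w_1⁻¹w_2 ∈ W_{A_{t_1}} · W_{A_{t_2}} (the product set of the two standard parabolic subgroups). -/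
/-!
Killing the generators outside `T` is a homomorphism `W → W` by the evenness assumption, and it
shows `t₁ = t₂`; what remains is that the centralizer of `t ∈ T` in `W_{S∖T}` is `W_{A_t}`.
If `w ∈ W_{S∖T}` commutes with `t`, its left inversions (counted mod 2 along any word, which is
well defined by the reflection cocycle) are stable under conjugation by `t`. For a reduced word
`x ω` of `w`, the reflection `t x t` is therefore a left inversion, hence lies in `W_{S∖T}`, and
killing `T` shows `t x t = x`. The geometric representation turns `x t = t x` into `m_{xt} = 2`,
and induction on the length finishes.
-/

open Real Finsupp

lemma SemidirectProduct.mk_pow {N G : Type*} [CommGroup N] [Group G] {φ : G →* MulAut N}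
    (n : N) (g : G) (k : ℕ) :
    (⟨n, g⟩ : N ⋊[φ] G) ^ k = ⟨∏ l ∈ Finset.range k, φ (g ^ l) n, g ^ k⟩ := by
  induction k with
  | zero => simp
  | succ k ih =>
    rw [pow_succ, ih, SemidirectProduct.mul_def, Finset.prod_range_succ, pow_succ]

lemma Finset.prod_range_two_mul {M : Type*} [CommMonoid M] (f : ℕ → M) (m : ℕ) :
    ∏ k ∈ Finset.range (2 * m), f k = ∏ l ∈ Finset.range m, f (2 * l) * f (2 * l + 1) := by
  induction m with
  | zero => simp
  | succ m ih =>
    rw [mul_add, Finset.prod_range_succ, Finset.prod_range_succ, ih, Finset.prod_range_succ,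
      mul_assoc]

lemma conj_pow_eq_pow_two_mul_mul {G : Type*} [Group G] {r g : G} (h : r * g⁻¹ = g * r)
    (l : ℕ) : g ^ l * r * (g ^ l)⁻¹ = g ^ (2 * l) * r := by
  rw [mul_assoc, ← inv_pow, (SemiconjBy.pow_right (x := g⁻¹) (y := g) h l).eq, two_mul,
    pow_add, mul_assoc]

noncomputable def conjParityAut (W : Type*) [Group W] :
    W →* MulAut (W → Multiplicative (ZMod 2)) :=
  mulAutArrow.comp (ConjAct.toConjAct : W ≃* ConjAct W).toMonoidHom

lemma conjParityAut_apply {W : Type*} [Group W] (g : W) (f : W → Multiplicative (ZMod 2))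
    (y : W) : conjParityAut W g f y = f (g⁻¹ * y * g) := by
  change f ((ConjAct.toConjAct g)⁻¹ • y) = _
  rw [ConjAct.smul_def, ← ConjAct.toConjAct_inv, ConjAct.ofConjAct_toConjAct, inv_inv]

lemma conjParityAut_mulSingle {W : Type*} [Group W] [DecidableEq W] (g x : W)
    (a : Multiplicative (ZMod 2)) :
    conjParityAut W g (Pi.mulSingle x a) = Pi.mulSingle (g * x * g⁻¹) a := by
  funext y
  rw [conjParityAut_apply, Pi.mulSingle_apply, Pi.mulSingle_apply]
  congr 1
  rw [eq_mul_inv_iff_mul_eq, mul_assoc, inv_mul_eq_iff_eq_mul]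

lemma List.prod_map_mulSingle_apply {ι M : Type*} [DecidableEq ι] [CommMonoid M] (l : List ι)
    (a : M) (y : ι) : (l.map fun x => Pi.mulSingle x a).prod y = a ^ l.count y := by
  induction l with
  | nil => simp
  | cons x l ih =>
    rw [List.map_cons, List.prod_cons, Pi.mul_apply, ih, List.count_cons]
    rcases eq_or_ne x y with rfl | h
    · simp [pow_succ, mul_comm]
    · simp [h]

lemma conj_eq_conj_iff_commute {G : Type*} [Group G] {a b x : G} :
    a * x * a⁻¹ = b * x * b⁻¹ ↔ Commute (a⁻¹ * b) x := by
  constructor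
  · intro h
    calc a⁻¹ * b * x = a⁻¹ * (b * x * b⁻¹) * b := by group
      _ = a⁻¹ * (a * x * a⁻¹) * b := by rw [h]
      _ = x * (a⁻¹ * b) := by group
  · intro h
    calc a * x * a⁻¹ = a * (a⁻¹ * b * x) * b⁻¹ := by rw [h.eq]; group
      _ = b * x * b⁻¹ := by group

lemma sin_pi_div_natCast_pos {m : ℕ} (hm : 2 ≤ m) : 0 < sin (π / m) := by
  refine sin_pos_of_pos_of_lt_pi (by positivity) ?_
  rw [div_lt_iff₀ (by positivity)]
  have : π * 2 ≤ π * m := by gcongr; exact_mod_cast hm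
  linarith [pi_pos]

lemma eq_two_of_cos_pi_div_natCast_eq_zero {m : ℕ} (hm : m ≠ 1) (h : cos (π / m) = 0) :
    m = 2 := by
  by_contra hm2
  rcases Nat.eq_zero_or_pos m with rfl | hpos
  · simp at h
  have : 0 < π / m := by positivity
  refine (cos_pos_of_mem_Ioo ⟨by linarith [pi_pos], ?_⟩).ne' h
  rw [div_lt_div_iff_of_pos_left pi_pos (by positivity) two_pos]
  exact_mod_cast (by omega : 2 < m)

namespace CoxeterMatrix

variable {B : Type*} (M : CoxeterMatrix B)

noncomputable def cosForm (i : B) : (B →₀ ℝ) →ₗ[ℝ] ℝ :=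
  linearCombination ℝ fun j => -cos (π / M i j)

noncomputable def geomReflection (i : B) : Module.End ℝ (B →₀ ℝ) :=
  LinearMap.id - (2 : ℝ) • (M.cosForm i).smulRight (single i 1)

variable {M}

lemma geomReflection_apply (i : B) (v : B →₀ ℝ) :
    M.geomReflection i v = v - (2 * M.cosForm i v) • single i 1 := by
  simp [geomReflection, mul_smul]

lemma cosForm_single (i j : B) : M.cosForm i (single j 1) = -cos (π / M i j) := by
  simp [cosForm]

lemma geomReflection_single (i j : B) :
    M.geomReflection i (single j 1) = single j 1 + (2 * cos (π / M i j)) • single i 1 := by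
  rw [geomReflection_apply, cosForm_single]; module

lemma geomReflection_single_self (i : B) : M.geomReflection i (single i 1) = -single i 1 := by
  rw [geomReflection_single, M.diagonal, Nat.cast_one, div_one, cos_pi]; module

lemma geomReflection_apply_of_cosForm_eq_zero {i : B} {v : B →₀ ℝ} (hv : M.cosForm i v = 0) :
    M.geomReflection i v = v := by
  simp [geomReflection_apply, hv]

lemma geomReflection_mul_self (i : B) : M.geomReflection i * M.geomReflection i = 1 := by
  refine LinearMap.ext fun v => ?_
  rw [Module.End.mul_apply, geomReflection_apply i v, map_sub, map_smul,
    geomReflection_single_self, Module.End.one_apply, geomReflection_apply]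
  module

lemma geomReflection_mul_apply (i j : B) (a b : ℝ) :
    (M.geomReflection i * M.geomReflection j) (a • single i 1 + b • single j 1) =
      ((4 * cos (π / M i j) ^ 2 - 1) * a - 2 * cos (π / M i j) * b) • single i 1 +
        (2 * cos (π / M i j) * a - b) • single j 1 := by
  simp only [Module.End.mul_apply, map_add, map_smul, geomReflection_single, M.symmetric j i,
    M.diagonal, Nat.cast_one, div_one, cos_pi]
  module

/-- On the plane of `single i 1, single j 1`, the product of the two reflections is the
rotation by `2π / M i j`. -/
lemma sin_smul_geomReflection_mul_pow_single (i j : B) (k : ℕ) :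
    sin (π / M i j) • ((M.geomReflection i * M.geomReflection j) ^ k) (single i 1) =
      sin ((2 * k + 1) * (π / M i j)) • single i 1 +
        sin (2 * k * (π / M i j)) • single j 1 := by
  set θ := π / M i j
  induction k with
  | zero => simp
  | succ k ih =>
    have hsin_succ : sin ((2 * k + 1) * θ + θ) =
        2 * cos θ * sin ((2 * k + 1) * θ) - sin ((2 * k + 1) * θ - θ) := by
      rw [sin_add, sin_sub]; ring
    have hsin_succ_succ : sin ((2 * k + 1) * θ + 2 * θ) =
        (4 * cos θ ^ 2 - 1) * sin ((2 * k + 1) * θ) -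
          2 * cos θ * sin ((2 * k + 1) * θ - θ) := by
      rw [sin_add, sin_sub, cos_two_mul, sin_two_mul]; ring
    rw [pow_succ', Module.End.mul_apply, ← map_smul, ih, geomReflection_mul_apply]
    push_cast
    rw [show (2 * (k + 1) + 1) * θ = (2 * k + 1) * θ + 2 * θ by ring,
      show 2 * (k + 1) * θ = (2 * k + 1) * θ + θ by ring,
      show 2 * k * θ = (2 * k + 1) * θ - θ by ring, hsin_succ, hsin_succ_succ]

lemma geomReflection_mul_pow_single_left {i j : B} (hij : 2 ≤ M i j) :
    ((M.geomReflection i * M.geomReflection j) ^ M i j) (single i 1) = single i 1 := by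
  have hm : (M i j : ℝ) ≠ 0 := by positivity
  have h := sin_smul_geomReflection_mul_pow_single (M := M) i j (M i j)
  rw [show (2 * M i j + 1) * (π / M i j) = π / M i j + 2 * π by field_simp; ring,
    show 2 * M i j * (π / M i j) = 2 * π by field_simp, sin_add_two_pi, sin_two_pi,
    zero_smul, add_zero] at h
  exact smul_right_injective _ (sin_pi_div_natCast_pos hij).ne' h

lemma geomReflection_mul_pow_single_right {i j : B} (hij : 2 ≤ M i j) :
    ((M.geomReflection i * M.geomReflection j) ^ M i j) (single j 1) = single j 1 := by
  have hinv : (M.geomReflection i * M.geomReflection j) ^ M i j *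
      (M.geomReflection j * M.geomReflection i) ^ M i j = 1 := by
    refine pow_mul_pow_eq_one _ ?_
    rw [mul_assoc, ← mul_assoc (M.geomReflection j), geomReflection_mul_self, one_mul,
      geomReflection_mul_self]
  have h := geomReflection_mul_pow_single_left (M := M) (i := j) (j := i) (by rwa [M.symmetric])
  rw [M.symmetric j i] at h
  conv_lhs => rw [← h, ← Module.End.mul_apply, hinv, Module.End.one_apply]

lemma geomReflection_mul_pow_apply_of_cosForm_eq_zero {i j : B} {v : B →₀ ℝ}
    (hi : M.cosForm i v = 0) (hj : M.cosForm j v = 0) (k : ℕ) :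
    ((M.geomReflection i * M.geomReflection j) ^ k) v = v := by
  rw [Module.End.pow_apply]
  refine Function.iterate_fixed ?_ k
  rw [Module.End.mul_apply, geomReflection_apply_of_cosForm_eq_zero hj,
    geomReflection_apply_of_cosForm_eq_zero hi]

lemma geomReflection_mul_pow_eq_one {i j : B} (hij : 2 ≤ M i j) :
    (M.geomReflection i * M.geomReflection j) ^ M i j = 1 := by
  set γ := cos (π / M i j)
  -- The Gram determinant of `single i 1, single j 1` is `1 - γ ^ 2 ≠ 0`, so `v` splits into a
  -- component in their plane and a vector killed by both forms.
  have hdet : 1 - γ ^ 2 ≠ 0 := by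
    rw [← sin_sq]; exact pow_ne_zero _ (sin_pi_div_natCast_pos hij).ne'
  have hii : M.cosForm i (single i 1) = 1 := by simp [cosForm_single]
  have hjj : M.cosForm j (single j 1) = 1 := by simp [cosForm_single]
  have hij' : M.cosForm i (single j 1) = -γ := cosForm_single i j
  have hji : M.cosForm j (single i 1) = -γ := by rw [cosForm_single, M.symmetric]
  refine LinearMap.ext fun v => ?_
  set a := (M.cosForm i v + γ * M.cosForm j v) / (1 - γ ^ 2)
  set b := (M.cosForm j v + γ * M.cosForm i v) / (1 - γ ^ 2)
  have hv₀i : M.cosForm i (v - a • single i 1 - b • single j 1) = 0 := by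
    simp only [map_sub, map_smul, hii, hij', smul_eq_mul, a, b]; field_simp; ring
  have hv₀j : M.cosForm j (v - a • single i 1 - b • single j 1) = 0 := by
    simp only [map_sub, map_smul, hjj, hji, smul_eq_mul, a, b]; field_simp; ring
  have hsplit :
      v = a • single i 1 + b • single j 1 + (v - a • single i 1 - b • single j 1) := by
    abel
  rw [hsplit, map_add, map_add, map_smul, map_smul, geomReflection_mul_pow_single_left hij,
    geomReflection_mul_pow_single_right hij,
    geomReflection_mul_pow_apply_of_cosForm_eq_zero hv₀i hv₀j, Module.End.one_apply]

lemma isLiftable_geomReflection : M.IsLiftable M.geomReflection := by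
  intro i j
  rcases eq_or_ne i j with rfl | hij
  · rw [M.diagonal, pow_one, geomReflection_mul_self]
  rcases Nat.eq_zero_or_pos (M i j) with h0 | hpos
  · rw [h0, pow_zero]
  · exact geomReflection_mul_pow_eq_one (by have := M.off_diagonal i j hij; omega)

end CoxeterMatrix

namespace CoxeterSystem

variable {B W : Type*} [Group W] {M : CoxeterMatrix B} (cs : CoxeterSystem M W)

noncomputable def geometricRepresentation : W →* Module.End ℝ (B →₀ ℝ) :=
  cs.lift ⟨M.geomReflection, M.isLiftable_geomReflection⟩

lemma geometricRepresentation_simple (i : B) :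
    cs.geometricRepresentation (cs.simple i) = M.geomReflection i :=
  cs.lift_apply_simple _ i

theorem simple_injective : Function.Injective cs.simple := by
  intro i j h
  by_contra hij
  have h' := congr(cs.geometricRepresentation $h (single i 1) i)
  simp only [geometricRepresentation_simple, M.geomReflection_single_self,
    M.geomReflection_single, Finsupp.neg_apply, Finsupp.add_apply, Finsupp.smul_apply,
    single_eq_same, single_eq_of_ne' (Ne.symm hij), smul_eq_mul] at h'
  norm_num at h'

theorem coxeterMatrix_eq_two_of_commute {i j : B} (hij : i ≠ j)
    (h : Commute (cs.simple i) (cs.simple j)) : M i j = 2 := by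
  refine eq_two_of_cos_pi_div_natCast_eq_zero (M.off_diagonal i j hij) ?_
  have h' := congr(cs.geometricRepresentation $h.eq (single i 1) j)
  simp only [map_mul, Module.End.mul_apply, geometricRepresentation_simple, map_add, map_smul,
    M.geomReflection_single, M.symmetric j i, M.diagonal, Nat.cast_one, div_one, cos_pi,
    Finsupp.add_apply, Finsupp.smul_apply, single_eq_same, single_eq_of_ne' hij,
    smul_eq_mul] at h'
  linarith

section ReflectionParity

variable [DecidableEq W]

def reflectionParityGen (i : B) : (W → Multiplicative (ZMod 2)) ⋊[conjParityAut W] W :=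
  ⟨Pi.mulSingle (cs.simple i) (Multiplicative.ofAdd 1), cs.simple i⟩

lemma isLiftable_reflectionParityGen : M.IsLiftable cs.reflectionParityGen := by
  intro i j
  set g := cs.simple i * cs.simple j
  set δ : W → W → Multiplicative (ZMod 2) := fun x => Pi.mulSingle x (Multiplicative.ofAdd 1)
  have hg : cs.simple i * g⁻¹ = g * cs.simple i := by
    simp only [g, mul_inv_rev, inv_simple, mul_assoc]
  have hmul : cs.reflectionParityGen i * cs.reflectionParityGen j =
      ⟨δ (cs.simple i) * δ (g * cs.simple i), g⟩ := by
    rw [reflectionParityGen, reflectionParityGen, SemidirectProduct.mul_def,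
      conjParityAut_mulSingle, inv_simple]
  have hconj : ∀ l, conjParityAut W (g ^ l) (δ (cs.simple i) * δ (g * cs.simple i)) =
      δ (g ^ (2 * l) * cs.simple i) * δ (g ^ (2 * l + 1) * cs.simple i) := by
    intro l
    rw [map_mul, conjParityAut_mulSingle, conjParityAut_mulSingle,
      conj_pow_eq_pow_two_mul_mul hg,
      show g ^ l * (g * cs.simple i) * (g ^ l)⁻¹ = g * (g ^ l * cs.simple i * (g ^ l)⁻¹) by
        group,
      conj_pow_eq_pow_two_mul_mul hg, ← mul_assoc, ← pow_succ']
  have hsq : ∀ f : W → Multiplicative (ZMod 2), f * f = 1 := fun f => by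
    funext y; exact CharTwo.add_self_eq_zero (R := ZMod 2) (f y).toAdd
  have hgm : g ^ M i j = 1 := cs.simple_mul_simple_pow i j
  rw [hmul, SemidirectProduct.mk_pow, hgm]
  refine SemidirectProduct.ext ?_ rfl
  -- The first component is `∏ k < 2m, δ (g ^ k * s i)`, and `g ^ m = 1` pairs off its factors.
  rw [Finset.prod_congr rfl fun l _ => hconj l,
    ← Finset.prod_range_two_mul (fun k => δ (g ^ k * cs.simple i)), two_mul,
    Finset.prod_range_add]
  simp only [pow_add, hgm, one_mul]
  exact hsq _

/-- The first component of `reflectionParity w` is the reflection cocycle of `w`: it counts, mod 2,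
the occurrences of each reflection in the left inversion sequence of any word for `w`. -/
noncomputable def reflectionParity :
    W →* (W → Multiplicative (ZMod 2)) ⋊[conjParityAut W] W :=
  cs.lift ⟨cs.reflectionParityGen, cs.isLiftable_reflectionParityGen⟩

lemma reflectionParity_wordProd (ω : List B) :
    cs.reflectionParity (cs.wordProd ω) =
      ⟨((cs.leftInvSeq ω).map fun y => Pi.mulSingle y (Multiplicative.ofAdd 1)).prod,
        cs.wordProd ω⟩ := by
  induction ω with
  | nil => rw [wordProd_nil, map_one]; rfl
  | cons i ω ih =>
    rw [wordProd_cons, map_mul, reflectionParity, lift_apply_simple, ← reflectionParity, ih,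
      reflectionParityGen, SemidirectProduct.mul_def]
    simp only [leftInvSeq, List.map_cons, List.prod_cons, List.map_map, map_list_prod,
      Function.comp_def, conjParityAut_mulSingle, MulAut.conj_apply]

theorem count_leftInvSeq_mod_two_eq {ω ω' : List B} (h : cs.wordProd ω = cs.wordProd ω')
    (y : W) : (cs.leftInvSeq ω).count y % 2 = (cs.leftInvSeq ω').count y % 2 := by
  have hy := congr((cs.reflectionParity $h).left y)
  rw [reflectionParity_wordProd, reflectionParity_wordProd] at hy
  simp only [List.prod_map_mulSingle_apply, ← ofAdd_nsmul, nsmul_one] at hy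
  exact (ZMod.natCast_eq_natCast_iff' _ _ 2).mp (Multiplicative.ofAdd.injective hy)

theorem count_leftInvSeq_conj_mod_two_eq {ω : List B} {t : B}
    (h : Commute (cs.wordProd ω) (cs.simple t)) (z : W) :
    (cs.leftInvSeq ω).count (cs.simple t * z * cs.simple t) % 2 =
      (cs.leftInvSeq ω).count z % 2 := by
  have hword : cs.wordProd (ω.concat t) = cs.wordProd (t :: ω) := by
    rw [wordProd_concat, wordProd_cons, h.eq]
  have hcount := cs.count_leftInvSeq_mod_two_eq hword (cs.simple t * z * cs.simple t)
  rw [leftInvSeq_concat, h.eq, mul_inv_cancel_right] at hcount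
  have hconj : cs.simple t * z * cs.simple t = MulAut.conj (cs.simple t) z := by
    rw [MulAut.conj_apply, inv_simple]
  simp only [leftInvSeq, List.concat_eq_append, List.count_append, List.count_cons,
    List.count_nil] at hcount
  have hmap := List.count_map_of_injective (cs.leftInvSeq ω) _
    (MulAut.conj (cs.simple t)).injective z
  rw [hconj, hmap, ← hconj] at hcount
  omega

end ReflectionParity

lemma simple_pow_of_even (i : B) {n : ℕ} (hn : Even n) : cs.simple i ^ n = 1 := by
  obtain ⟨c, rfl⟩ := hn
  rw [← two_mul, pow_mul, simple_sq, one_pow]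

lemma commute_simple_of_coxeterMatrix_eq_two {i j : B} (h : M i j = 2) :
    Commute (cs.simple i) (cs.simple j) := by
  have := cs.simple_mul_simple_pow i j
  rw [h, pow_two, mul_eq_one_iff_eq_inv, mul_inv_rev, inv_simple, inv_simple] at this
  exact this

lemma commute_simple_of_mem_closure {V : Set B} {t : B} (hV : ∀ x ∈ V, M x t = 2) {w : W}
    (hw : w ∈ Subgroup.closure (cs.simple '' V)) : Commute w (cs.simple t) := by
  suffices Subgroup.closure (cs.simple '' V) ≤ Subgroup.centralizer {cs.simple t} from
    Subgroup.mem_centralizer_singleton_iff.mp (this hw)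
  rw [Subgroup.closure_le]
  rintro _ ⟨x, hx, rfl⟩
  exact Subgroup.mem_centralizer_singleton_iff.mpr
    (cs.commute_simple_of_coxeterMatrix_eq_two (hV x hx))

lemma mem_closure_of_mem_leftInvSeq {V : Set B} {ω : List B} (hω : ∀ i ∈ ω, i ∈ V) {y : W}
    (hy : y ∈ cs.leftInvSeq ω) : y ∈ Subgroup.closure (cs.simple '' V) := by
  induction ω generalizing y with
  | nil => simp at hy
  | cons i ω ih =>
    have hi : cs.simple i ∈ Subgroup.closure (cs.simple '' V) :=
      Subgroup.subset_closure ⟨i, hω i List.mem_cons_self, rfl⟩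
    rcases List.mem_cons.mp hy with rfl | hy
    · exact hi
    · obtain ⟨z, hz, rfl⟩ := List.mem_map.mp hy
      rw [MulAut.conj_apply]
      have hz' := ih (fun j hj => hω j (List.mem_cons_of_mem i hj)) hz
      exact Subgroup.mul_mem _ (Subgroup.mul_mem _ hi hz') (Subgroup.inv_mem _ hi)

section Retraction

variable (U : Set B) (hU : ∀ i ∈ U, ∀ j ∉ U, Even (M i j))

open Classical in
/-- The paper's `φ_U`. -/
noncomputable def retraction : W →* W :=
  cs.lift ⟨fun i => if i ∈ U then 1 else cs.simple i, by
    intro i j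
    by_cases hi : i ∈ U <;> by_cases hj : j ∈ U <;> simp only [hi, hj, if_true, if_false]
    · rw [one_mul, one_pow]
    · rw [one_mul]; exact cs.simple_pow_of_even j (hU i hi j hj)
    · rw [mul_one]; exact cs.simple_pow_of_even i (M.symmetric j i ▸ hU j hj i hi)
    · exact cs.simple_mul_simple_pow i j⟩

variable {U}

lemma retraction_simple_of_mem {i : B} (hi : i ∈ U) : cs.retraction U hU (cs.simple i) = 1 := by
  classical
  exact (cs.lift_apply_simple _ i).trans (if_pos hi)

lemma retraction_simple_of_notMem {i : B} (hi : i ∉ U) :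
    cs.retraction U hU (cs.simple i) = cs.simple i := by
  classical
  exact (cs.lift_apply_simple _ i).trans (if_neg hi)

lemma retraction_eq_one_of_mem_closure {w : W} (hw : w ∈ Subgroup.closure (cs.simple '' U)) :
    cs.retraction U hU w = 1 := by
  refine MonoidHom.eqOn_closure (g := 1) ?_ hw
  rintro _ ⟨i, hi, rfl⟩
  exact cs.retraction_simple_of_mem hU hi

lemma retraction_eq_self_of_mem_closure {w : W} (hw : w ∈ Subgroup.closure (cs.simple '' Uᶜ)) :
    cs.retraction U hU w = w := by
  refine MonoidHom.eqOn_closure (g := MonoidHom.id W) ?_ hw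
  rintro _ ⟨i, hi, rfl⟩
  exact cs.retraction_simple_of_notMem hU hi

lemma retraction_wordProd (ω : List B) [DecidablePred (· ∈ U)] :
    cs.retraction U hU (cs.wordProd ω) = cs.wordProd (ω.filter (· ∉ U)) := by
  induction ω with
  | nil => simp
  | cons i ω ih =>
    by_cases hi : i ∈ U
    · simp [wordProd_cons, ih, hi, cs.retraction_simple_of_mem hU hi]
    · simp [wordProd_cons, ih, hi, cs.retraction_simple_of_notMem hU hi]

include hU in
/-- The retraction deletes the letters in `U` from `ω` without changing its value. -/
lemma IsReduced.notMem_of_mem_closure {ω : List B} (hω : cs.IsReduced ω)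
    (hw : cs.wordProd ω ∈ Subgroup.closure (cs.simple '' Uᶜ)) : ∀ i ∈ ω, i ∉ U := by
  classical
  have hfilter : cs.wordProd (ω.filter (· ∉ U)) = cs.wordProd ω := by
    rw [← retraction_wordProd cs hU, retraction_eq_self_of_mem_closure cs hU hw]
  have hlen : ω.length ≤ (ω.filter (· ∉ U)).length := by
    calc ω.length = cs.length (cs.wordProd ω) := hω.symm
      _ = cs.length (cs.wordProd (ω.filter (· ∉ U))) := by rw [hfilter]
      _ ≤ _ := cs.length_wordProd_le _
  intro i hi
  rw [← List.filter_sublist.eq_of_length_le hlen] at hi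
  simpa using (List.mem_filter.mp hi).2

end Retraction

section Centralizer

variable {T : Set B} (heven : ∀ t ∈ T, ∀ s ∉ T, Even (M t s))

include heven in
/-- Conjugation by `t` preserves the left inversions of `x ω` mod 2, so the reflection `t x t` is
one of them; it then lies in `W_{S∖T}`, where `φ_T` is the identity, while `φ_T (t x t) = x`. -/
lemma commute_simple_of_commute_wordProd_cons {x t : B} {ω : List B} (ht : t ∈ T)
    (hω : cs.IsReduced (x :: ω)) (hωT : ∀ i ∈ x :: ω, i ∉ T)
    (hcomm : Commute (cs.wordProd (x :: ω)) (cs.simple t)) :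
    Commute (cs.simple x) (cs.simple t) := by
  classical
  have hcount := cs.count_leftInvSeq_conj_mod_two_eq hcomm (cs.simple x)
  rw [List.count_eq_one_of_mem hω.nodup_leftInvSeq List.mem_cons_self] at hcount
  have hmem : cs.simple t * cs.simple x * cs.simple t ∈ cs.leftInvSeq (x :: ω) :=
    List.count_pos_iff.mp (by omega)
  have hfix := cs.retraction_eq_self_of_mem_closure heven
    (cs.mem_closure_of_mem_leftInvSeq (V := Tᶜ) hωT hmem)
  rw [map_mul, map_mul, retraction_simple_of_mem _ _ ht,
    retraction_simple_of_notMem _ _ (hωT x List.mem_cons_self), one_mul, mul_one] at hfix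
  calc cs.simple x * cs.simple t
      = cs.simple t * cs.simple x * cs.simple t * cs.simple t := by rw [← hfix]
    _ = cs.simple t * cs.simple x := simple_mul_simple_cancel_right _ _

include heven in
lemma wordProd_mem_closure_of_commute {t : B} (ht : t ∈ T) (ω : List B) (hω : cs.IsReduced ω)
    (hωT : ∀ i ∈ ω, i ∉ T) (hcomm : Commute (cs.wordProd ω) (cs.simple t)) :
    cs.wordProd ω ∈ Subgroup.closure (cs.simple '' {x | x ∉ T ∧ M x t = 2}) := by
  induction ω with
  | nil => exact Subgroup.one_mem _
  | cons x ω ih =>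
    have hx : x ∉ T := hωT x List.mem_cons_self
    have hxt := cs.commute_simple_of_commute_wordProd_cons heven ht hω hωT hcomm
    have hM : M x t = 2 := cs.coxeterMatrix_eq_two_of_commute (ne_of_mem_of_not_mem ht hx).symm hxt
    rw [wordProd_cons] at hcomm ⊢
    refine Subgroup.mul_mem _ (Subgroup.subset_closure ⟨x, ⟨hx, hM⟩, rfl⟩) (ih ?_ ?_ ?_)
    · simpa using hω.drop 1
    · exact fun i hi => hωT i (List.mem_cons_of_mem x hi)
    · simpa only [simple_mul_simple_cancel_left] using hxt.mul_left hcomm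

include heven in
theorem mem_closure_of_commute {t : B} (ht : t ∈ T) {w : W}
    (hw : w ∈ Subgroup.closure (cs.simple '' Tᶜ)) (hcomm : Commute w (cs.simple t)) :
    w ∈ Subgroup.closure (cs.simple '' {x | x ∉ T ∧ M x t = 2}) := by
  obtain ⟨ω, hω, rfl⟩ := cs.exists_isReduced w
  exact cs.wordProd_mem_closure_of_commute heven ht ω hω
    (IsReduced.notMem_of_mem_closure cs heven hω hw) hcomm

end Centralizer

end CoxeterSystem

/-- Under the evenness assumption on `T ⊆ S`, with `A_t = {s ∈ S∖T : m s t = 2}`: for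
`t₁, t₂ ∈ T` and `w₁, w₂ ∈ W_{S∖T}` we have `w₁ t₁ w₁⁻¹ = w₂ t₂ w₂⁻¹` if and only if `t₁ = t₂`
and `w₁⁻¹w₂` lies in the product set `W_{A_{t₁}} · W_{A_{t₂}}`. -/
theorem conjugate_generators_eq_iff {B W : Type*} [Group W] (M : CoxeterMatrix B)
    (cs : CoxeterSystem M W) (T : Set B)
    (heven : ∀ t ∈ T, ∀ s ∉ T, Even (M t s))
    (t₁ t₂ : B) (ht₁ : t₁ ∈ T) (ht₂ : t₂ ∈ T)
    (w₁ w₂ : W) (hw₁ : w₁ ∈ Subgroup.closure (cs.simple '' Tᶜ))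
    (hw₂ : w₂ ∈ Subgroup.closure (cs.simple '' Tᶜ)) :
    w₁ * cs.simple t₁ * w₁⁻¹ = w₂ * cs.simple t₂ * w₂⁻¹ ↔
      t₁ = t₂ ∧
      ∃ a ∈ Subgroup.closure (cs.simple '' {s | s ∉ T ∧ M s t₁ = 2}),
        ∃ b ∈ Subgroup.closure (cs.simple '' {s | s ∉ T ∧ M s t₂ = 2}),
          w₁⁻¹ * w₂ = a * b := by
  constructor
  · intro h
    have hevenCompl : ∀ i ∈ Tᶜ, ∀ j ∉ Tᶜ, Even (M i j) := fun i hi j hj =>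
      M.symmetric i j ▸ heven j (Set.notMem_compl_iff.mp hj) i hi
    obtain rfl : t₁ = t₂ := cs.simple_injective <| by
      simpa [cs.retraction_eq_one_of_mem_closure hevenCompl hw₁,
        cs.retraction_eq_one_of_mem_closure hevenCompl hw₂,
        cs.retraction_simple_of_notMem hevenCompl (Set.notMem_compl_iff.mpr ht₁),
        cs.retraction_simple_of_notMem hevenCompl (Set.notMem_compl_iff.mpr ht₂)]
        using congr(cs.retraction Tᶜ hevenCompl $h)
    exact ⟨rfl, w₁⁻¹ * w₂, cs.mem_closure_of_commute heven ht₁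
      (Subgroup.mul_mem _ (Subgroup.inv_mem _ hw₁) hw₂) (conj_eq_conj_iff_commute.mp h),
      1, Subgroup.one_mem _, (mul_one _).symm⟩
  · rintro ⟨rfl, a, ha, b, hb, hab⟩
    rw [conj_eq_conj_iff_commute, hab]
    exact (cs.commute_simple_of_mem_closure (fun x hx => hx.2) ha).mul_left
      (cs.commute_simple_of_mem_closure (fun x hx => hx.2) hb)
end

section
/- Let (W,S) be a Coxeter system with Coxeter matrix m and let T ⊆ S be such that for every t ∈ T and s ∈ S∖T the exponent m_{st} is even or ∞. Let u ∈ ker φ_T and let s_1 s_2 ⋯ s_k be a reduced word in S representing u. Let n be the number of indices i with s_i ∈ T. Then n equals the minimal length of an expression of u as a product of elements of S_T; that is, the word length of u with respect to the generating set S_T equals the number of letters from T in any reduced S-word for u. -/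
/-!
Since `m_{st}` is even or `∞` whenever exactly one of `s, t` lies in `T`, the assignment
`s ↦ -1` for `s ∈ T`, `s ↦ 1` otherwise extends to a character `η : W → {±1}`. Tits' sign action
of `W` on `W × {±1}` attaches to every `w` a finite inversion set `N(w)` with
`N(uv) ⊆ v⁻¹ N(u) v ∪ N(v)`, and for a reduced word `N(w)` is the set of its right inversions.
Hence the number `ν(w)` of inversions `t` with `η t = -1` is subadditive, vanishes on
`W_{S∖T}`, is at most `1` on `S_T`, and equals the number of letters from `T` in any reduced
word for `w`. This is the lower bound; the upper bound comes from moving every letter from `T`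
of the word to the front, conjugated by the image under `φ_T` of the prefix before it, which
leaves the factor `φ_T(u) = 1`.
-/

open Finset

section ConjSignPerm

variable {G : Type*} [Group G]

theorem conj_eq_iff_eq_conj_inv (g t z : G) : g * t * g⁻¹ = z ↔ t = g⁻¹ * z * g := by
  constructor <;> rintro rfl <;> group

theorem inv_pow_mul_eq_mul_pow {x y : G} (hx : x⁻¹ = x) (hy : y⁻¹ = y) (k : ℕ) :
    ((x * y) ^ k)⁻¹ * y = y * (x * y) ^ k := by
  induction k with
  | zero => simp
  | succ k ih =>
    rw [pow_succ, mul_inv_rev, mul_assoc, ih, mul_inv_rev, hx, hy,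
      ← (Commute.self_pow (x * y) k).eq]
    simp only [mul_assoc]

variable [DecidableEq G]

/-- For a simple reflection `x` this is Tits' action of `x` on (reflection, sign) pairs. -/
def conjSignPerm (x : G) : Equiv.Perm (G × ℤˣ) where
  toFun p := (x * p.1 * x⁻¹, p.2 * if p.1 = x then -1 else 1)
  invFun p := (x⁻¹ * p.1 * x, p.2 * if p.1 = x then -1 else 1)
  left_inv := by
    rintro ⟨t, ε⟩
    by_cases h : t = x <;> simp [h, mul_assoc, mul_inv_eq_iff_eq_mul]
  right_inv := by
    rintro ⟨t, ε⟩
    by_cases h : t = x <;> simp [h, mul_assoc, inv_mul_eq_iff_eq_mul]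

theorem conjSignPerm_apply (x t : G) (ε : ℤˣ) :
    conjSignPerm x (t, ε) = (x * t * x⁻¹, ε * if t = x then -1 else 1) := rfl

section Involutions

variable {x y : G} (hx : x⁻¹ = x) (hy : y⁻¹ = y)
include hx hy

theorem conjSignPerm_mul_pow_apply (k : ℕ) (t : G) (ε : ℤˣ) :
    ((conjSignPerm x * conjSignPerm y) ^ k) (t, ε) =
      ((x * y) ^ k * t * ((x * y) ^ k)⁻¹,
        ε * ∏ j ∈ range (2 * k), if t = y * (x * y) ^ j then -1 else 1) := by
  induction k generalizing ε with
  | zero => simp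
  | succ k ih =>
    have h₀ : (x * y) ^ k * t * ((x * y) ^ k)⁻¹ = y ↔ t = y * (x * y) ^ (2 * k) := by
      rw [conj_eq_iff_eq_conj_inv, inv_pow_mul_eq_mul_pow hx hy, mul_assoc, ← pow_add, two_mul]
    have h₁ : y * ((x * y) ^ k * t * ((x * y) ^ k)⁻¹) * y⁻¹ = x ↔
        t = y * (x * y) ^ (2 * k + 1) := by
      rw [conj_eq_iff_eq_conj_inv, conj_eq_iff_eq_conj_inv, hy, ← mul_assoc, ← mul_assoc,
        inv_pow_mul_eq_mul_pow hx hy, show 2 * k + 1 = k + (1 + k) by ring, pow_add, pow_add,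
        pow_one]
      simp only [mul_assoc]
    rw [pow_succ', Equiv.Perm.mul_apply, ih, Equiv.Perm.mul_apply, conjSignPerm_apply,
      conjSignPerm_apply]
    dsimp only
    simp only [h₀, h₁]
    refine Prod.ext ?_ ?_
    · simp only [pow_succ', mul_inv_rev, mul_assoc]
    · simp only [mul_add_one, prod_range_succ, mul_assoc]

/-- The sign sequence of `(conjSignPerm x * conjSignPerm y) ^ m` runs over `y (x y) ^ j`,
`j < 2 m`, which is `m`-periodic when `(x y) ^ m = 1`: every sign is used twice. -/
theorem conjSignPerm_mul_pow_eq_one {m : ℕ} (hm : (x * y) ^ m = 1) :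
    (conjSignPerm x * conjSignPerm y) ^ m = 1 := by
  ext ⟨t, ε⟩ : 1
  have hperiodic : ∀ j, y * (x * y) ^ (m + j) = y * (x * y) ^ j := by simp [pow_add, hm]
  rw [conjSignPerm_mul_pow_apply hx hy, hm, two_mul, prod_range_add]
  simp [hperiodic]

end Involutions

end ConjSignPerm

namespace CoxeterSystem

variable {B W : Type*} [Group W] {M : CoxeterMatrix B} (cs : CoxeterSystem M W)

section SignRep

variable [DecidableEq W]

def signRep : W →* Equiv.Perm (W × ℤˣ) :=
  cs.lift ⟨fun i => conjSignPerm (cs.simple i), fun i j =>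
    conjSignPerm_mul_pow_eq_one (cs.inv_simple i) (cs.inv_simple j) (cs.simple_mul_simple_pow i j)⟩

theorem signRep_simple (i : B) : cs.signRep (cs.simple i) = conjSignPerm (cs.simple i) :=
  cs.lift_apply_simple _ i

theorem signRep_wordProd_apply (ω : List B) (t : W) (ε : ℤˣ) :
    cs.signRep (cs.wordProd ω) (t, ε) =
      (cs.wordProd ω * t * (cs.wordProd ω)⁻¹, ε * (-1) ^ (cs.rightInvSeq ω).count t) := by
  induction ω with
  | nil => simp
  | cons i ω ih =>
    have hcond : cs.wordProd ω * t * (cs.wordProd ω)⁻¹ = cs.simple i ↔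
        (cs.wordProd ω)⁻¹ * cs.simple i * cs.wordProd ω = t := by
      rw [conj_eq_iff_eq_conj_inv, eq_comm]
    rw [wordProd_cons, map_mul, Equiv.Perm.mul_apply, ih, signRep_simple, conjSignPerm_apply]
    refine Prod.ext ?_ ?_
    · simp only [mul_inv_rev, cs.inv_simple, mul_assoc]
    · simp only [rightInvSeq, List.count_cons, beq_iff_eq, hcond]
      split_ifs <;> simp [pow_succ]

def invSign (w t : W) : ℤˣ := (cs.signRep w (t, 1)).2

theorem signRep_apply (w t : W) (ε : ℤˣ) :
    cs.signRep w (t, ε) = (w * t * w⁻¹, ε * cs.invSign w t) := by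
  obtain ⟨ω, rfl⟩ := cs.wordProd_surjective w
  simp [invSign, signRep_wordProd_apply]

theorem invSign_mul (u v t : W) :
    cs.invSign (u * v) t = cs.invSign v t * cs.invSign u (v * t * v⁻¹) := by
  rw [invSign, map_mul, Equiv.Perm.mul_apply, signRep_apply, signRep_apply, one_mul]

theorem invSign_wordProd (ω : List B) (t : W) :
    cs.invSign (cs.wordProd ω) t = (-1) ^ (cs.rightInvSeq ω).count t := by
  simp [invSign, signRep_wordProd_apply]

def inversionSet (w : W) : Set W := {t | cs.invSign w t = -1}

theorem inversionSet_wordProd_subset (ω : List B) :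
    cs.inversionSet (cs.wordProd ω) ⊆ {t | t ∈ cs.rightInvSeq ω} := by
  intro t ht
  by_contra hnot
  simp [inversionSet, invSign_wordProd, List.count_eq_zero_of_not_mem hnot] at ht

theorem inversionSet_wordProd_of_isReduced {ω : List B} (hω : cs.IsReduced ω) :
    cs.inversionSet (cs.wordProd ω) = {t | t ∈ cs.rightInvSeq ω} := by
  refine (cs.inversionSet_wordProd_subset ω).antisymm fun t ht => ?_
  simp [inversionSet, invSign_wordProd, List.count_eq_one_of_mem hω.nodup_rightInvSeq ht]

theorem inversionSet_finite (w : W) : (cs.inversionSet w).Finite := by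
  obtain ⟨ω, rfl⟩ := cs.wordProd_surjective w
  exact (List.finite_toSet _).subset (cs.inversionSet_wordProd_subset ω)

theorem inversionSet_mul_subset (u v : W) :
    cs.inversionSet (u * v) ⊆ (fun t => v⁻¹ * t * v) '' cs.inversionSet u ∪ cs.inversionSet v := by
  intro t ht
  simp only [inversionSet, Set.mem_ofPred_eq, invSign_mul] at ht
  rcases Int.units_eq_one_or (cs.invSign v t) with hv | hv
  · refine Or.inl ⟨v * t * v⁻¹, ?_, by group⟩
    simpa [inversionSet, hv] using ht
  · exact Or.inr hv

end SignRep

theorem map_rightInvSeq {A : Type*} [CommGroup A] (η : W →* A) (ω : List B) :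
    (cs.rightInvSeq ω).map η = ω.map (η ∘ cs.simple) := by
  induction ω with
  | nil => rfl
  | cons i ω ih => simp [rightInvSeq, ih]

theorem countP_rightInvSeq {A : Type*} [CommGroup A] (η : W →* A) (p : A → Bool) (ω : List B) :
    (cs.rightInvSeq ω).countP (p ∘ η) = ω.countP (p ∘ η ∘ cs.simple) := by
  rw [← List.countP_map, map_rightInvSeq, List.countP_map]

/-- The set `S_T`. -/
def simpleConjugates (T : Set B) : Set W :=
  {x | ∃ t ∈ T, ∃ w ∈ Subgroup.closure (cs.simple '' Tᶜ), x = w * cs.simple t * w⁻¹}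

section InversionCount

variable [DecidableEq W] (η : W →* ℤˣ)

noncomputable def inversionCount (w : W) : ℕ := (cs.inversionSet w ∩ {t | η t = -1}).ncard

theorem inversionCount_wordProd_le (ω : List B) :
    cs.inversionCount η (cs.wordProd ω) ≤ (cs.rightInvSeq ω).countP (η · = -1) := by
  have hsub : cs.inversionSet (cs.wordProd ω) ∩ {t | η t = -1} ⊆
      ↑((cs.rightInvSeq ω).filter (η · = -1)).toFinset := fun t ht => by
    simpa using And.intro (cs.inversionSet_wordProd_subset ω ht.1) ht.2
  calc cs.inversionCount η (cs.wordProd ω)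
      ≤ ((cs.rightInvSeq ω).filter (η · = -1)).toFinset.card :=
        (Set.ncard_le_ncard hsub).trans_eq (Set.ncard_coe_finset _)
    _ ≤ _ := (List.toFinset_card_le _).trans_eq List.countP_eq_length_filter.symm

theorem inversionCount_wordProd_of_isReduced {ω : List B} (hω : cs.IsReduced ω) :
    cs.inversionCount η (cs.wordProd ω) = (cs.rightInvSeq ω).countP (η · = -1) := by
  have hset : cs.inversionSet (cs.wordProd ω) ∩ {t | η t = -1} =
      ↑((cs.rightInvSeq ω).filter (η · = -1)).toFinset := by
    ext t
    simp [cs.inversionSet_wordProd_of_isReduced hω]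
  rw [inversionCount, hset, Set.ncard_coe_finset,
    List.toFinset_card_of_nodup (hω.nodup_rightInvSeq.filter _), List.countP_eq_length_filter]

theorem inversionCount_simple_le (i : B) :
    cs.inversionCount η (cs.simple i) ≤ if η (cs.simple i) = -1 then 1 else 0 := by
  simpa [List.countP_cons] using cs.inversionCount_wordProd_le η [i]

theorem inversionCount_one : cs.inversionCount η 1 = 0 :=
  Nat.le_zero.mp (by simpa using cs.inversionCount_wordProd_le η [])

theorem inversionCount_mul_le (u v : W) :
    cs.inversionCount η (u * v) ≤ cs.inversionCount η u + cs.inversionCount η v := by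
  have hconj : ∀ t, η (v⁻¹ * t * v) = η t := fun t => by
    rw [map_mul, map_mul, map_inv, inv_mul_cancel_comm]
  have hsub : cs.inversionSet (u * v) ∩ {t | η t = -1} ⊆
      (fun t => v⁻¹ * t * v) '' (cs.inversionSet u ∩ {t | η t = -1}) ∪
        (cs.inversionSet v ∩ {t | η t = -1}) := by
    rintro t ⟨ht, hη⟩
    rcases cs.inversionSet_mul_subset u v ht with ⟨t', ht', rfl⟩ | ht
    · exact Or.inl ⟨t', ⟨ht', by simpa [hconj] using hη⟩, rfl⟩
    · exact Or.inr ⟨ht, hη⟩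
  have hfin : ∀ w, (cs.inversionSet w ∩ {t | η t = -1}).Finite := fun w =>
    (cs.inversionSet_finite w).inter_of_left _
  calc cs.inversionCount η (u * v)
      ≤ ((fun t => v⁻¹ * t * v) '' (cs.inversionSet u ∩ {t | η t = -1}) ∪
          (cs.inversionSet v ∩ {t | η t = -1})).ncard :=
        Set.ncard_le_ncard hsub (((hfin u).image _).union (hfin v))
    _ ≤ _ := (Set.ncard_union_le _ _).trans_eq <| by
        rw [Set.ncard_image_of_injective _ fun a b h => by simpa using h]; rfl

theorem inversionCount_eq_zero_of_mem_closure {X : Set B} (hX : ∀ i ∈ X, η (cs.simple i) = 1)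
    {w : W} (hw : w ∈ Subgroup.closure (cs.simple '' X)) : cs.inversionCount η w = 0 := by
  have hgen : ∀ x ∈ cs.simple '' X, cs.inversionCount η x = 0 := by
    rintro _ ⟨i, hi, rfl⟩
    simpa [hX i hi] using cs.inversionCount_simple_le η i
  induction hw using Subgroup.closure_induction'' with
  | mem x hx => exact hgen x hx
  | inv_mem x hx =>
    obtain ⟨i, hi, rfl⟩ := hx
    rw [inv_simple]
    exact hgen _ ⟨i, hi, rfl⟩
  | one => exact cs.inversionCount_one η
  | mul x y _ _ hx hy =>
    have := cs.inversionCount_mul_le η x y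
    omega

theorem inversionCount_list_prod_le {l : List W} (hl : ∀ x ∈ l, cs.inversionCount η x ≤ 1) :
    cs.inversionCount η l.prod ≤ l.length := by
  induction l with
  | nil => simp [cs.inversionCount_one η]
  | cons x l ih =>
    have := cs.inversionCount_mul_le η x l.prod
    have := hl x List.mem_cons_self
    have := ih fun y hy => hl y (List.mem_cons_of_mem x hy)
    simp only [List.prod_cons, List.length_cons]
    omega

theorem inversionCount_le_one_of_mem_simpleConjugates {T : Set B}
    (hη : ∀ i ∈ Tᶜ, η (cs.simple i) = 1) {x : W} (hx : x ∈ cs.simpleConjugates T) :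
    cs.inversionCount η x ≤ 1 := by
  obtain ⟨t, -, w, hw, rfl⟩ := hx
  have hw₀ := cs.inversionCount_eq_zero_of_mem_closure η hη hw
  have hw₀' := cs.inversionCount_eq_zero_of_mem_closure η hη (inv_mem hw)
  have ht : cs.inversionCount η (cs.simple t) ≤ 1 :=
    (cs.inversionCount_simple_le η t).trans (by split_ifs <;> simp)
  have := cs.inversionCount_mul_le η (w * cs.simple t) w⁻¹
  have := cs.inversionCount_mul_le η w (cs.simple t)
  omega

end InversionCount

section KernelGenerators

variable {T : Set B} {φ : W →* W} (hφ₁ : ∀ s ∉ T, φ (cs.simple s) = cs.simple s)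
  (hφ₂ : ∀ t ∈ T, φ (cs.simple t) = 1)
include hφ₁ hφ₂

theorem map_mem_closure_simple_compl (v : W) : φ v ∈ Subgroup.closure (cs.simple '' Tᶜ) := by
  induction v using cs.simple_induction_left with
  | one => simp [one_mem]
  | mul_simple_left w i ih =>
    rw [map_mul]
    by_cases hi : i ∈ T
    · simpa [hφ₂ i hi] using ih
    · rw [hφ₁ i hi]
      exact mul_mem (Subgroup.subset_closure ⟨i, hi, rfl⟩) ih

theorem exists_prod_simpleConjugates_mul_map_wordProd [DecidablePred (· ∈ T)] (ω : List B) :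
    ∃ l : List W, (∀ x ∈ l, x ∈ cs.simpleConjugates T) ∧
      l.prod * φ (cs.wordProd ω) = cs.wordProd ω ∧ l.length = ω.countP (· ∈ T) := by
  induction ω using List.reverseRecOn with
  | nil => exact ⟨[], by simp, by simp, by simp⟩
  | append_singleton ω i ih =>
    obtain ⟨l, hl, hprod, hlen⟩ := ih
    by_cases hi : i ∈ T
    · set v := cs.wordProd ω
      refine ⟨l ++ [φ v * cs.simple i * (φ v)⁻¹], ?_, ?_, ?_⟩
      · simp only [List.mem_append, List.mem_singleton]
        rintro x (hx | rfl)
        exacts [hl x hx, ⟨i, hi, φ v, cs.map_mem_closure_simple_compl hφ₁ hφ₂ v, rfl⟩]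
      · rw [List.prod_append, List.prod_singleton, wordProd_append, wordProd_singleton, map_mul,
          hφ₂ i hi, mul_one]
        calc l.prod * (φ v * cs.simple i * (φ v)⁻¹) * φ v = l.prod * φ v * cs.simple i := by group
          _ = v * cs.simple i := by rw [hprod]
      · simp [hlen, hi]
    · refine ⟨l, hl, ?_, by simp [hlen, hi]⟩
      rw [wordProd_append, wordProd_singleton, map_mul, hφ₁ i hi, ← mul_assoc, hprod]

end KernelGenerators

end CoxeterSystem

theorem CoxeterMatrix.isLiftable_ite_neg_one {B : Type*} (M : CoxeterMatrix B) {T : Set B}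
    [DecidablePred (· ∈ T)] (heven : ∀ t ∈ T, ∀ s ∉ T, Even (M t s)) :
    M.IsLiftable (fun i => if i ∈ T then (-1 : ℤˣ) else 1) := by
  intro i j
  by_cases hi : i ∈ T <;> by_cases hj : j ∈ T
  · simp [hi, hj]
  · simpa [hi, hj] using (heven i hi j hj).neg_one_pow
  · simpa [hi, hj, M.symmetric i j] using (heven j hj i hi).neg_one_pow
  · simp [hi, hj]

open CoxeterSystem in
/-- Under the evenness assumption on `T ⊆ S`, let `u ∈ ker φ_T` and let `ω` be a reduced word in
`S` representing `u`. Then the number `n` of letters of `ω` lying in `T` equals the word length of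
`u` with respect to the generating set `S_T = {w t w⁻¹ : t ∈ T, w ∈ W_{S∖T}}`: there is a product
of `n` elements of `S_T` equal to `u`, and no shorter such product. -/
theorem length_in_kernel_eq_count {B W : Type*} [Group W] (M : CoxeterMatrix B)
    (cs : CoxeterSystem M W) (T : Set B) [DecidablePred (· ∈ T)]
    (heven : ∀ t ∈ T, ∀ s ∉ T, Even (M t s))
    (φ : W →* W)
    (hφ₁ : ∀ s ∉ T, φ (cs.simple s) = cs.simple s)
    (hφ₂ : ∀ t ∈ T, φ (cs.simple t) = 1)
    (u : W) (hu : u ∈ φ.ker)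
    (ω : List B) (hred : cs.IsReduced ω) (hωu : cs.wordProd ω = u) :
    (∃ l : List W,
        (∀ x ∈ l, x ∈ {x : W | ∃ t ∈ T, ∃ w ∈ Subgroup.closure (cs.simple '' Tᶜ),
          x = w * cs.simple t * w⁻¹}) ∧
        l.prod = u ∧ l.length = ω.countP (fun i => decide (i ∈ T))) ∧
    (∀ l : List W,
        (∀ x ∈ l, x ∈ {x : W | ∃ t ∈ T, ∃ w ∈ Subgroup.closure (cs.simple '' Tᶜ),
          x = w * cs.simple t * w⁻¹}) →
        l.prod = u → ω.countP (fun i => decide (i ∈ T)) ≤ l.length) := by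
  classical
  refine ⟨?_, fun l hl hprod => ?_⟩
  · obtain ⟨l, hl, hprod, hlen⟩ := cs.exists_prod_simpleConjugates_mul_map_wordProd hφ₁ hφ₂ ω
    rw [hωu, MonoidHom.mem_ker.mp hu, mul_one] at hprod
    exact ⟨l, hl, hprod, hlen⟩
  · let η : W →* ℤˣ := cs.lift ⟨_, M.isLiftable_ite_neg_one heven⟩
    have hη (i : B) : η (cs.simple i) = if i ∈ T then -1 else 1 := cs.lift_apply_simple _ i
    have hcount : cs.inversionCount η u = ω.countP (· ∈ T) := by
      rw [← hωu, cs.inversionCount_wordProd_of_isReduced η hred]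
      refine (cs.countP_rightInvSeq η (· = -1) ω).trans (List.countP_congr fun i _ => ?_)
      by_cases hi : i ∈ T <;> simp [hη, hi]
    have hη' (i : B) (hi : i ∈ Tᶜ) : η (cs.simple i) = 1 := (hη i).trans (if_neg hi)
    have hgen (x : W) (hx : x ∈ l) : cs.inversionCount η x ≤ 1 :=
      cs.inversionCount_le_one_of_mem_simpleConjugates η hη' (hl x hx)
    exact hcount ▸ hprod ▸ cs.inversionCount_list_prod_le η hgen
end

section
/- Let (W,S) be a Coxeter system with Coxeter matrix m and let T ⊆ S be such that for every t ∈ T and s ∈ S∖T the exponent m_{st} is even or ∞. Then the Coxeter system (ker φ_T, S_T) is right-angled — that is, for all distinct τ_1, τ_2 ∈ S_T the order of τ_1τ_2 is 2 or ∞ — if and only if: (1) m_{st} ∈ {2,4,∞} for all s ∈ S∖T and t ∈ T, and (2) m_{tt'} ∈ {2,∞} for all distinct t,t' ∈ T. -/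
/-!
For `a ≠ b` the order of `s_a s_b` is exactly `m_ab`: in the Tits representation `s_a s_b` rotates
the plane of `α_a, α_b` by `2π / m_ab`. Hence for `t ∈ T`, `s ∉ T` the product of `s_t` and
`s_s s_t s_s ∈ S_T` is `(s_t s_s)²`, of order `m_st / 2`, and for `t, t' ∈ T` the product `s_t s_t'`
has order `m_tt'`; this gives the necessity of (1) and (2).

Conversely, let `ρ₁ ≠ ρ₂` in `S_T`; the involution `ρ₁` is not `ρ₂⁻¹`, so `ρ₁ ρ₂` has order `2` as
soon as `(ρ₁ ρ₂)² = 1`. Otherwise, label `ρ₁` and `ρ₂` by the two reflections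
`sr 0`, `sr 1` of the infinite dihedral group `D∞` and every other element by `1`. Under (1) and (2)
each Coxeter relation involving some `s_t`, `t ∈ T`, says that certain pairs `r, r'` of conjugates
of the `s_t` satisfy `(r r')² = 1`, so none of these pairs is `{ρ₁, ρ₂}`. Therefore
`s_t ↦ (x ↦ label (x⁻¹ s_t x))`, `s_u ↦ s_u` (`u ∉ T`) defines a homomorphism `W → D∞ ≀ W`, under
which `ρ₁ ρ₂` has coordinate `sr 0 * sr 1` (a translation of infinite order) at `1`.
-/

theorem pow_mul_comm_eq_one {G : Type*} [Group G] {a b : G} {n : ℕ} (h : (a * b) ^ n = 1) :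
    (b * a) ^ n = 1 := by
  rw [show b * a = a⁻¹ * (a * b) * a⁻¹⁻¹ by group, conj_pow, h]
  group

theorem orderOf_mul_le_two {G : Type*} [Group G] {τ₁ τ₂ : G} (hτ₁ : τ₁ * τ₁ = 1)
    (h : τ₁ ≠ τ₂ → orderOf (τ₁ * τ₂) = 2 ∨ ¬IsOfFinOrder (τ₁ * τ₂)) : orderOf (τ₁ * τ₂) ≤ 2 := by
  rcases eq_or_ne τ₁ τ₂ with rfl | hne
  · simp [hτ₁]
  · rcases h hne with h | h
    · exact h.le
    · simp [orderOf_eq_zero_iff.mpr h]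

namespace RegularWreathProduct

variable {D Q : Type*} [Group D] [Group Q]

def base : (Q → D) →* D ≀ᵣ Q where
  toFun f := ⟨f, 1⟩
  map_one' := rfl
  map_mul' f g := by ext <;> simp

theorem base_injective : Function.Injective (base : (Q → D) →* D ≀ᵣ Q) :=
  fun _ _ h ↦ congrArg left h

theorem inl_mul_base_mul_inl_inv (q : Q) (f : Q → D) :
    inl q * base f * inl q⁻¹ = base fun x ↦ f (q⁻¹ * x) := by
  ext <;> simp [base]

theorem base_mul_inl_sq (f : Q → D) (q : Q) :
    (base f * inl q) ^ 2 = base (f * fun x ↦ f (q⁻¹ * x)) * inl (q ^ 2) := by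
  ext <;> simp [base, sq]

end RegularWreathProduct

section DihedralLabel

open DihedralGroup

variable {G : Type*}

open Classical in
noncomputable def dihedralLabel (ρ₁ ρ₂ r : G) : DihedralGroup 0 :=
  if r = ρ₁ then sr 0 else if r = ρ₂ then sr 1 else 1

theorem dihedralLabel_mul_self (ρ₁ ρ₂ r : G) :
    dihedralLabel ρ₁ ρ₂ r * dihedralLabel ρ₁ ρ₂ r = 1 := by
  unfold dihedralLabel
  split_ifs <;> simp

theorem sq_dihedralLabel_conj_mul [Group G] {ρ₁ ρ₂ : G} (hρ : (ρ₁ * ρ₂) ^ 2 ≠ 1) {a b : G}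
    (hab : (a * b) ^ 2 = 1) (hba : (b * a) ^ 2 = 1) (x : G) :
    (dihedralLabel ρ₁ ρ₂ (x⁻¹ * a * x) * dihedralLabel ρ₁ ρ₂ (x⁻¹ * b * x)) ^ 2 = 1 := by
  have hconj {c d : G} (hcd : (c * d) ^ 2 = 1) : (x⁻¹ * c * x * (x⁻¹ * d * x)) ^ 2 = 1 := by
    rw [show x⁻¹ * c * x * (x⁻¹ * d * x) = x⁻¹ * (c * d) * x⁻¹⁻¹ by group, conj_pow, hcd]
    group
  have h₁ := hconj hab
  have h₂ := hconj hba
  unfold dihedralLabel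
  split_ifs <;> simp_all [sq, sr_mul_sr]

theorem orderOf_dihedralLabel_mul {ρ₁ ρ₂ : G} (hne : ρ₁ ≠ ρ₂) :
    orderOf (dihedralLabel ρ₁ ρ₂ ρ₁ * dihedralLabel ρ₁ ρ₂ ρ₂) = 0 := by
  simp [dihedralLabel, hne.symm, sr_mul_sr, orderOf_r_one]

end DihedralLabel

open Real

namespace CoxeterMatrix

variable {B : Type*} (M : CoxeterMatrix B)

/-- For `m_ab = 0`, i.e. `∞`, the convention `π / 0 = 0` gives the correct value `-1`. -/
noncomputable def titsForm (a b : B) : ℝ := -cos (π / M a b)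

noncomputable def titsPairing (b : B) : (B →₀ ℝ) →ₗ[ℝ] ℝ :=
  Finsupp.linearCombination ℝ (M.titsForm b)

noncomputable def reflection (b : B) : Module.End ℝ (B →₀ ℝ) :=
  LinearMap.id - (2 : ℝ) • (M.titsPairing b).smulRight (Finsupp.single b 1)

noncomputable def planeVector (a b : B) (θ : ℝ) : B →₀ ℝ :=
  sin (θ + π / M a b) • Finsupp.single a 1 + sin θ • Finsupp.single b 1

variable {M}

theorem titsForm_comm (a b : B) : M.titsForm a b = M.titsForm b a := by
  rw [titsForm, titsForm, M.symmetric]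

theorem titsPairing_single (a b : B) : M.titsPairing a (Finsupp.single b 1) = M.titsForm a b := by
  simp [titsPairing]

theorem titsForm_self (b : B) : M.titsForm b b = 1 := by
  simp [titsForm]

theorem titsPairing_single_self (b : B) : M.titsPairing b (Finsupp.single b 1) = 1 := by
  rw [titsPairing_single, titsForm_self]

theorem reflection_apply (b : B) (v : B →₀ ℝ) :
    M.reflection b v = v - (2 * M.titsPairing b v) • Finsupp.single b 1 := by
  simp [reflection, mul_smul]

theorem reflection_single (a b : B) :
    M.reflection a (Finsupp.single b 1) =
      Finsupp.single b 1 - (2 * M.titsForm a b) • Finsupp.single a 1 := by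
  rw [reflection_apply, titsPairing_single]

theorem reflection_mul_self (b : B) : M.reflection b * M.reflection b = 1 := by
  refine LinearMap.ext fun v ↦ ?_
  simp only [Module.End.mul_apply, reflection_apply, map_sub, map_smul, titsPairing_single_self]
  module

theorem reflection_apply_of_titsPairing_eq_zero {b : B} {v : B →₀ ℝ}
    (h : M.titsPairing b v = 0) : M.reflection b v = v := by
  simp [reflection_apply, h]

section RankTwo

variable (a b : B)

local notation "γ" => π / (M a b : ℝ)

theorem reflection_mul_reflection_planeVector (θ : ℝ) :
    (M.reflection a * M.reflection b) (M.planeVector a b θ) = M.planeVector a b (θ + 2 * γ) := by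
  have hab : M.titsForm a b = -cos γ := rfl
  have hba : M.titsForm b a = -cos γ := by rw [titsForm_comm]; rfl
  have hsin₁ : sin (θ + 2 * γ) = 2 * cos γ * sin (θ + γ) - sin θ := by
    rw [show θ + 2 * γ = θ + γ + γ by ring, show θ = θ + γ - γ by ring, sin_add, sin_sub]
    ring_nf
  have hsin₂ : sin (θ + 2 * γ + γ) = (4 * cos γ ^ 2 - 1) * sin (θ + γ) - 2 * cos γ * sin θ := by
    rw [show θ + 2 * γ + γ = θ + γ + 2 * γ by ring, show θ = θ + γ - γ by ring, sin_add, sin_sub,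
      cos_two_mul, sin_two_mul]
    ring_nf
  simp only [planeVector, Module.End.mul_apply, map_add, map_smul, map_sub, reflection_single,
    titsForm_self, hab, hba, hsin₁, hsin₂]
  module

theorem reflection_mul_reflection_pow_planeVector (θ : ℝ) (k : ℕ) :
    ((M.reflection a * M.reflection b) ^ k) (M.planeVector a b θ) =
      M.planeVector a b (θ + 2 * k * γ) := by
  induction k with
  | zero => simp
  | succ k ih =>
    rw [pow_succ', Module.End.mul_apply, ih, reflection_mul_reflection_planeVector]
    push_cast
    ring_nf

theorem sin_pi_div_pos (hm : 2 ≤ M a b) : 0 < sin γ := by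
  have hm' : (2 : ℝ) ≤ M a b := by exact_mod_cast hm
  apply sin_pos_of_pos_of_lt_pi (by positivity)
  exact div_lt_self pi_pos (by linarith)

theorem exists_titsPairing_sub_eq_zero (hm : 2 ≤ M a b) (v : B →₀ ℝ) :
    ∃ x y : ℝ, M.titsPairing a (v - x • Finsupp.single a 1 - y • Finsupp.single b 1) = 0 ∧
      M.titsPairing b (v - x • Finsupp.single a 1 - y • Finsupp.single b 1) = 0 := by
  have hsin₀ : sin γ ≠ 0 := (sin_pi_div_pos a b hm).ne'
  -- invert the Gram matrix `[[1, -cos γ], [-cos γ, 1]]`, of determinant `sin γ ^ 2`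
  have hab : M.titsForm a b = -cos γ := rfl
  have hba : M.titsForm b a = -cos γ := by rw [titsForm_comm]; rfl
  refine ⟨(M.titsPairing a v + cos γ * M.titsPairing b v) / sin γ ^ 2,
    (cos γ * M.titsPairing a v + M.titsPairing b v) / sin γ ^ 2, ?_, ?_⟩ <;>
    simp only [map_sub, map_smul, titsPairing_single, titsForm_self, smul_eq_mul, hab, hba] <;>
    field_simp
  · linear_combination M.titsPairing a v * sin_sq_add_cos_sq γ
  · linear_combination M.titsPairing b v * sin_sq_add_cos_sq γ

theorem reflection_mul_reflection_pow_eq_one (hm : 2 ≤ M a b) :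
    (M.reflection a * M.reflection b) ^ M a b = 1 := by
  set ρ := M.reflection a * M.reflection b
  have hperiodic (θ : ℝ) : (ρ ^ M a b) (M.planeVector a b θ) = M.planeVector a b θ := by
    have hm₀ : (M a b : ℝ) ≠ 0 := by positivity
    have h2π : θ + 2 * (M a b : ℕ) * γ = θ + 2 * π := by field_simp
    rw [reflection_mul_reflection_pow_planeVector, h2π, planeVector, planeVector,
      add_right_comm, sin_add_two_pi, sin_add_two_pi]
  have hsin := (sin_pi_div_pos a b hm).ne'
  have ha : (ρ ^ M a b) (Finsupp.single a 1) = Finsupp.single a 1 := by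
    have h := hperiodic 0
    simp only [planeVector, zero_add, sin_zero, zero_smul, add_zero, map_smul] at h
    exact smul_right_injective _ hsin h
  have hb : (ρ ^ M a b) (Finsupp.single b 1) = Finsupp.single b 1 := by
    have h := hperiodic (-γ)
    simp only [planeVector, neg_add_cancel, sin_zero, zero_smul, zero_add, sin_neg, neg_smul,
      map_neg, map_smul, neg_inj] at h
    exact smul_right_injective _ hsin h
  refine LinearMap.ext fun v ↦ ?_
  obtain ⟨x, y, hxa, hxb⟩ := exists_titsPairing_sub_eq_zero a b hm v
  set v' := v - x • Finsupp.single a 1 - y • Finsupp.single b 1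
  have hv' : ρ v' = v' := by
    rw [Module.End.mul_apply, reflection_apply_of_titsPairing_eq_zero hxb,
      reflection_apply_of_titsPairing_eq_zero hxa]
  have hv : v = v' + x • Finsupp.single a 1 + y • Finsupp.single b 1 := by module
  rw [hv, map_add, map_add, map_smul, map_smul, ha, hb, Module.End.pow_apply,
    Function.iterate_fixed hv', Module.End.one_apply]

theorem reflection_mul_reflection_pow_ne_one {k : ℕ} (hk₀ : 0 < k) (hk : k < M a b) :
    (M.reflection a * M.reflection b) ^ k ≠ 1 := by
  have hab : a ≠ b := by
    rintro rfl
    rw [M.diagonal] at hk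
    omega
  have hm : 2 ≤ M a b := by have := M.off_diagonal a b hab; omega
  intro h
  have h' := reflection_mul_reflection_pow_planeVector (M := M) a b 0 k
  rw [h, Module.End.one_apply, zero_add] at h'
  have hsin₀ : sin (2 * k * γ) = 0 := by
    simpa [planeVector, hab, Finsupp.single_apply] using (congrArg (· b) h').symm
  have hsin₁ : sin (2 * k * γ + γ) = sin γ := by
    simpa [planeVector, hab.symm, Finsupp.single_apply] using (congrArg (· a) h').symm
  have hcos : cos (2 * k * γ) = 1 := by
    rw [sin_add, hsin₀, zero_mul, zero_add] at hsin₁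
    exact (mul_eq_right₀ (sin_pi_div_pos a b hm).ne').mp hsin₁
  obtain ⟨n, hn⟩ := cos_eq_one_iff _ |>.mp hcos
  have hkn : (k : ℤ) = n * M a b := by
    have hm₀ : (M a b : ℝ) ≠ 0 := by positivity
    field_simp at hn
    exact_mod_cast (by linarith : (k : ℝ) = n * M a b)
  exact hk₀.ne' (Nat.eq_zero_of_dvd_of_lt (Int.natCast_dvd_natCast.mp ⟨n, by linarith⟩) hk)

end RankTwo

variable (M) in
noncomputable def reflectionUnit (b : B) : (Module.End ℝ (B →₀ ℝ))ˣ :=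
  ⟨M.reflection b, M.reflection b, reflection_mul_self b, reflection_mul_self b⟩

variable (M) in
theorem isLiftable_reflectionUnit : M.IsLiftable M.reflectionUnit := by
  intro a b
  ext1
  rw [Units.val_pow_eq_pow_val, Units.val_mul, Units.val_one]
  rcases eq_or_ne a b with rfl | hab
  · rw [M.diagonal, pow_one]
    exact reflection_mul_self a
  rcases eq_or_ne (M a b) 0 with h₀ | h₀
  · rw [h₀, pow_zero]
  · exact reflection_mul_reflection_pow_eq_one a b (by have := M.off_diagonal a b hab; omega)

end CoxeterMatrix

namespace CoxeterSystem

variable {B W : Type*} [Group W] {M : CoxeterMatrix B} (cs : CoxeterSystem M W)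

theorem pow_simple_mul_simple_ne_one {a b : B} {k : ℕ} (hk₀ : 0 < k) (hk : k < M a b) :
    (cs.simple a * cs.simple b) ^ k ≠ 1 := by
  intro h
  apply M.reflection_mul_reflection_pow_ne_one a b hk₀ hk
  simpa [CoxeterMatrix.reflectionUnit] using
    congrArg (fun w ↦ (cs.lift ⟨_, M.isLiftable_reflectionUnit⟩ w).val) h

theorem orderOf_simple_mul_simple {a b : B} (h : M a b ≠ 0) :
    orderOf (cs.simple a * cs.simple b) = M a b :=
  (orderOf_eq_iff (Nat.pos_of_ne_zero h)).mpr
    ⟨cs.simple_mul_simple_pow a b, fun _ hk hk₀ ↦ cs.pow_simple_mul_simple_ne_one hk₀ hk⟩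

theorem eq_two_or_eq_zero_of_orderOf_le_two {a b : B} (hab : a ≠ b)
    (h : orderOf (cs.simple a * cs.simple b) ≤ 2) : M a b = 2 ∨ M a b = 0 := by
  rcases eq_or_ne (M a b) 0 with h₀ | h₀
  · exact Or.inr h₀
  rw [cs.orderOf_simple_mul_simple h₀] at h
  have := M.off_diagonal a b hab
  omega

theorem eq_two_or_eq_four_or_eq_zero_of_orderOf_sq_le_two {a b : B} (heven : Even (M a b))
    (h : orderOf ((cs.simple a * cs.simple b) ^ 2) ≤ 2) : M a b = 2 ∨ M a b = 4 ∨ M a b = 0 := by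
  rcases eq_or_ne (M a b) 0 with h₀ | h₀
  · exact Or.inr (Or.inr h₀)
  have hdvd : 2 ∣ orderOf (cs.simple a * cs.simple b) :=
    cs.orderOf_simple_mul_simple h₀ ▸ even_iff_two_dvd.mp heven
  rw [orderOf_pow_of_dvd two_ne_zero hdvd, cs.orderOf_simple_mul_simple h₀] at h
  obtain ⟨k, hk⟩ := heven
  omega

/-- The set `S_T`. -/
def kernelGenerators (T : Set B) : Set W :=
  {x | ∃ t ∈ T, ∃ w ∈ Subgroup.closure (cs.simple '' Tᶜ), x = w * cs.simple t * w⁻¹}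

variable {T : Set B}

theorem simple_mem_kernelGenerators {t : B} (ht : t ∈ T) : cs.simple t ∈ cs.kernelGenerators T :=
  ⟨t, ht, 1, one_mem _, by group⟩

theorem simple_mul_simple_mul_simple_mem_kernelGenerators {s t : B} (hs : s ∉ T) (ht : t ∈ T) :
    cs.simple s * cs.simple t * cs.simple s ∈ cs.kernelGenerators T :=
  ⟨t, ht, cs.simple s, Subgroup.subset_closure ⟨s, hs, rfl⟩, by rw [cs.inv_simple]⟩

theorem mul_self_of_mem_kernelGenerators {ρ : W} (h : ρ ∈ cs.kernelGenerators T) : ρ * ρ = 1 := by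
  obtain ⟨t, -, w, -, rfl⟩ := h
  rw [show w * cs.simple t * w⁻¹ * (w * cs.simple t * w⁻¹) = w * (cs.simple t * cs.simple t) * w⁻¹
    by group, cs.simple_mul_simple_self, mul_one, mul_inv_cancel]

open RegularWreathProduct in
theorem exists_monoidHom_regularWreathProduct {D : Type*} [Group D] (ℓ : W → D)
    (heven : ∀ t ∈ T, ∀ s ∉ T, Even (M t s))
    (hT : ∀ t ∈ T, ∀ t' ∈ T, ∀ x : W,
      (ℓ (x⁻¹ * cs.simple t * x) * ℓ (x⁻¹ * cs.simple t' * x)) ^ M t t' = 1)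
    (hTc : ∀ t ∈ T, ∀ u ∉ T, ∀ x : W,
      (ℓ (x⁻¹ * cs.simple t * x) * ℓ (x⁻¹ * (cs.simple u * cs.simple t * cs.simple u) * x)) ^
        (M t u / 2) = 1) :
    ∃ θ : W →* D ≀ᵣ W, ∀ ρ ∈ cs.kernelGenerators T, θ ρ = base fun x ↦ ℓ (x⁻¹ * ρ * x) := by
  classical
  set F : B → W → D := fun t x ↦ ℓ (x⁻¹ * cs.simple t * x)
  set f : B → D ≀ᵣ W := fun b ↦ if b ∈ T then base (F b) else inl (cs.simple b)
  have hbase {t t' : B} (ht : t ∈ T) (ht' : t' ∈ T) :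
      (f t * f t') ^ M t t' = 1 := by
    simp only [f, if_pos ht, if_pos ht', ← map_mul, ← map_pow]
    rw [show (F t * F t') ^ M t t' = 1 from funext (hT t ht t' ht'), map_one]
  have hmixed {t u : B} (ht : t ∈ T) (hu : u ∉ T) : (f t * f u) ^ M t u = 1 := by
    obtain ⟨k, hk⟩ := heven t ht u hu
    have hF : (F t * fun x ↦ F t ((cs.simple u)⁻¹ * x)) ^ (M t u / 2) = 1 := by
      funext x
      simpa [F, mul_assoc] using hTc t ht u hu x
    simp only [f, if_pos ht, if_neg hu]
    rw [show M t u = 2 * (M t u / 2) by omega, pow_mul, base_mul_inl_sq, cs.simple_sq, map_one,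
      mul_one, ← map_pow, hF, map_one]
  have hf : M.IsLiftable f := by
    intro i j
    by_cases hi : i ∈ T <;> by_cases hj : j ∈ T
    · exact hbase hi hj
    · exact hmixed hi hj
    · exact M.symmetric i j ▸ pow_mul_comm_eq_one (hmixed hj hi)
    · simp only [f, if_neg hi, if_neg hj, ← map_mul, ← map_pow, cs.simple_mul_simple_pow, map_one]
  refine ⟨cs.lift ⟨f, hf⟩, ?_⟩
  have hP : Subgroup.closure (cs.simple '' Tᶜ) ≤ MonoidHom.eqLocus (cs.lift ⟨f, hf⟩) inl := by
    rw [Subgroup.closure_le]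
    rintro _ ⟨u, hu, rfl⟩
    exact (cs.lift_apply_simple hf u).trans (if_neg hu)
  rintro _ ⟨t, ht, w, hw, rfl⟩
  rw [map_mul, map_mul, map_inv, hP hw, lift_apply_simple]
  simp only [f, if_pos ht, ← map_inv, inl_mul_base_mul_inl_inv, F]
  congr 2 with x
  group

open RegularWreathProduct in
theorem not_isOfFinOrder_mul (heven : ∀ t ∈ T, ∀ s ∉ T, Even (M t s))
    (h1 : ∀ s ∉ T, ∀ t ∈ T, M s t = 2 ∨ M s t = 4 ∨ M s t = 0)
    (h2 : ∀ t ∈ T, ∀ t' ∈ T, t ≠ t' → M t t' = 2 ∨ M t t' = 0)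
    {ρ₁ ρ₂ : W} (hρ₁ : ρ₁ ∈ cs.kernelGenerators T) (hρ₂ : ρ₂ ∈ cs.kernelGenerators T)
    (hne : ρ₁ ≠ ρ₂) (hsq : (ρ₁ * ρ₂) ^ 2 ≠ 1) : ¬IsOfFinOrder (ρ₁ * ρ₂) := by
  have hpow (a b : B) (k : ℕ) (hk : M a b = k) : (cs.simple a * cs.simple b) ^ k = 1 :=
    hk ▸ cs.simple_mul_simple_pow a b
  obtain ⟨θ, hθ⟩ := cs.exists_monoidHom_regularWreathProduct (dihedralLabel ρ₁ ρ₂) heven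
    (fun t ht t' ht' x ↦ by
      rcases eq_or_ne t t' with rfl | htt'
      · rw [M.diagonal, pow_one, dihedralLabel_mul_self]
      rcases h2 t ht t' ht' htt' with hm | hm <;> rw [hm]
      · exact sq_dihedralLabel_conj_mul hsq (hpow t t' 2 hm)
          (pow_mul_comm_eq_one (hpow t t' 2 hm)) x
      · exact pow_zero _)
    (fun t ht u hu x ↦ by
      rcases h1 u hu t ht with hm | hm | hm <;> rw [M.symmetric, hm]
      · have hcomm : cs.simple u * cs.simple t * cs.simple u = cs.simple t := by
          have := hpow u t 2 hm
          rw [sq, ← mul_assoc, mul_eq_one_iff_eq_inv, cs.inv_simple] at this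
          exact this
        rw [hcomm, Nat.div_self two_pos, pow_one, dihedralLabel_mul_self]
      · refine sq_dihedralLabel_conj_mul hsq ?_ ?_ x
        · rw [← hpow t u 4 (M.symmetric t u ▸ hm)]
          simp only [pow_succ, pow_zero, one_mul, mul_assoc]
        · rw [← hpow u t 4 hm]
          simp only [pow_succ, pow_zero, one_mul, mul_assoc]
      · exact pow_zero _)
  intro hfin
  have h := θ.isOfFinOrder hfin
  rw [map_mul, hθ ρ₁ hρ₁, hθ ρ₂ hρ₂, ← map_mul, base_injective.isOfFinOrder_iff] at h
  exact orderOf_eq_zero_iff.mp (orderOf_dihedralLabel_mul hne) (by simpa using h.apply 1)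

end CoxeterSystem

/-- Under the evenness assumption on `T ⊆ S`, the Coxeter system `(ker φ_T, S_T)` is right-angled
— i.e. for all distinct `τ₁, τ₂ ∈ S_T = {w t w⁻¹ : t ∈ T, w ∈ W_{S∖T}}` the order of `τ₁τ₂` is
`2` or `∞` — if and only if (1) `m s t ∈ {2, 4, ∞}` for all `s ∈ S∖T`, `t ∈ T`, and
(2) `m t t' ∈ {2, ∞}` for all distinct `t, t' ∈ T`. (In a `CoxeterMatrix`, `0` encodes `∞`.) -/
theorem kernel_right_angled_iff {B W : Type*} [Group W] (M : CoxeterMatrix B)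
    (cs : CoxeterSystem M W) (T : Set B)
    (heven : ∀ t ∈ T, ∀ s ∉ T, Even (M t s)) :
    (∀ τ₁ ∈ {x : W | ∃ t ∈ T, ∃ w ∈ Subgroup.closure (cs.simple '' Tᶜ),
        x = w * cs.simple t * w⁻¹},
     ∀ τ₂ ∈ {x : W | ∃ t ∈ T, ∃ w ∈ Subgroup.closure (cs.simple '' Tᶜ),
        x = w * cs.simple t * w⁻¹},
      τ₁ ≠ τ₂ → orderOf (τ₁ * τ₂) = 2 ∨ ¬IsOfFinOrder (τ₁ * τ₂)) ↔
    ((∀ s ∉ T, ∀ t ∈ T, M s t = 2 ∨ M s t = 4 ∨ M s t = 0) ∧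
     (∀ t ∈ T, ∀ t' ∈ T, t ≠ t' → M t t' = 2 ∨ M t t' = 0)) := by
  change (∀ τ₁ ∈ cs.kernelGenerators T, ∀ τ₂ ∈ cs.kernelGenerators T, _) ↔ _
  constructor
  · intro hRA
    have hle {τ₁ τ₂ : W} (h₁ : τ₁ ∈ cs.kernelGenerators T) (h₂ : τ₂ ∈ cs.kernelGenerators T) :
        orderOf (τ₁ * τ₂) ≤ 2 :=
      orderOf_mul_le_two (cs.mul_self_of_mem_kernelGenerators h₁) (hRA τ₁ h₁ τ₂ h₂)
    refine ⟨fun s hs t ht ↦ ?_, fun t ht t' ht' htt' ↦ ?_⟩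
    · have h := hle (cs.simple_mem_kernelGenerators ht)
        (cs.simple_mul_simple_mul_simple_mem_kernelGenerators hs ht)
      rw [show cs.simple t * (cs.simple s * cs.simple t * cs.simple s) =
        (cs.simple t * cs.simple s) ^ 2 by simp only [sq, mul_assoc]] at h
      rw [M.symmetric]
      exact cs.eq_two_or_eq_four_or_eq_zero_of_orderOf_sq_le_two (heven t ht s hs) h
    · exact cs.eq_two_or_eq_zero_of_orderOf_le_two htt'
        (hle (cs.simple_mem_kernelGenerators ht) (cs.simple_mem_kernelGenerators ht'))
  · rintro ⟨h1, h2⟩ τ₁ hτ₁ τ₂ hτ₂ hne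
    by_cases hsq : (τ₁ * τ₂) ^ 2 = 1
    · refine Or.inl (orderOf_eq_prime hsq fun h ↦ hne ?_)
      rw [eq_inv_of_mul_eq_one_left h, inv_eq_of_mul_eq_one_left
        (cs.mul_self_of_mem_kernelGenerators hτ₂)]
    · exact Or.inr (cs.not_isOfFinOrder_mul heven h1 h2 hτ₁ hτ₂ hne hsq)
end
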